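/- arXiv:0712.2871 — 7 statements merged into one kernel-verified Lean document; each statement's English description precedes it below -/
import Mathlib

section
/- Let (W,S) be a Coxeter system with S finite such that for every proper subset I ⊊ S the standard parabolic subgroup W_I is finite. Then every infinite subset V ⊆ W is cofinal in the Bruhat order: for every σ ∈ W there exists v ∈ V with σ ≤ v. -/
/-!
Induct on a reduced word `i :: ρ` for `σ`. The parabolic subgroup `W_{S ∖ {i}}` is finite, so its
lengths are bounded, and every sufficiently long `w` lies outside it. Cutting a reduced word for
such a `w` at the first occurrence of `i` writes `w = a * s i * u` with lengths adding up,
`a ∈ W_{S ∖ {i}}` short and hence `u` long; by induction `ρ` is a subword of a reduced word for `u`,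
so `i :: ρ` is a subword of one for `w`. An infinite set has elements of arbitrary length, because
length balls are finite.
-/

/-- The Bruhat order on a Coxeter group: `u ≤ w` iff some reduced word for `w`
has a sublist (subword) which is a reduced word for `u`. -/
def CoxeterSystem.bruhatLE {B W : Type*} [Group W] {M : CoxeterMatrix B}
    (cs : CoxeterSystem M W) (u w : W) : Prop :=
  ∃ ω : List B, cs.IsReduced ω ∧ cs.wordProd ω = w ∧
    ∃ ω' : List B, ω'.Sublist ω ∧ cs.IsReduced ω' ∧ cs.wordProd ω' = u

namespace CoxeterSystem

variable {B W : Type*} [Group W] {M : CoxeterMatrix B} (cs : CoxeterSystem M W)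

theorem wordProd_mem_closure_simple_image {I : Set B} {ω : List B} (h : ∀ j ∈ ω, j ∈ I) :
    cs.wordProd ω ∈ Subgroup.closure (cs.simple '' I) :=
  Subgroup.list_prod_mem _ fun x hx => by
    obtain ⟨j, hj, rfl⟩ := List.mem_map.1 hx
    exact Subgroup.subset_closure ⟨j, h j hj, rfl⟩

theorem finite_setOf_length_le [Finite B] (N : ℕ) : {w : W | cs.length w ≤ N}.Finite := by
  refine ((List.finite_length_le B N).image cs.wordProd).subset fun w hw => ?_
  obtain ⟨ω, hω, rfl⟩ := cs.exists_isReduced w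
  exact ⟨ω, by simpa [hω.eq] using hw, rfl⟩

theorem bruhatLE_one_left (w : W) : cs.bruhatLE 1 w := by
  obtain ⟨ω, hω, rfl⟩ := cs.exists_isReduced w
  exact ⟨ω, hω, rfl, [], List.nil_sublist ω, by simp [IsReduced], cs.wordProd_nil⟩

theorem length_mul_simple_mul_le (a : W) (i : B) (u : W) :
    cs.length (a * cs.simple i * u) ≤ cs.length a + 1 + cs.length u := by
  have := cs.length_mul_le (a * cs.simple i) u
  have := cs.length_mul_le a (cs.simple i)
  rw [length_simple] at this
  omega

theorem exists_eq_mul_simple_mul_of_notMem_closure {i : B} {w : W}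
    (hw : w ∉ Subgroup.closure (cs.simple '' {i}ᶜ)) :
    ∃ a ∈ Subgroup.closure (cs.simple '' {i}ᶜ), ∃ u : W,
      w = a * cs.simple i * u ∧ cs.length w = cs.length a + 1 + cs.length u := by
  classical
  obtain ⟨ω, hω, rfl⟩ := cs.exists_isReduced w
  have hi : i ∈ ω := by
    by_contra hi
    exact hw (cs.wordProd_mem_closure_simple_image fun j hj => by rintro rfl; exact hi hj)
  obtain ⟨α, β, hiα, rfl, -⟩ := List.exists_erase_eq hi
  have hα := cs.wordProd_mem_closure_simple_image (I := {i}ᶜ) fun j hj => by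
    rintro rfl; exact hiα hj
  have hprod : cs.wordProd (α ++ i :: β) = cs.wordProd α * cs.simple i * cs.wordProd β := by
    rw [wordProd_append, wordProd_cons, mul_assoc]
  refine ⟨_, hα, _, hprod, le_antisymm (hprod ▸ cs.length_mul_simple_mul_le _ _ _) ?_⟩
  rw [hω.eq, List.length_append, List.length_cons]
  have := cs.length_wordProd_le α
  have := cs.length_wordProd_le β
  omega

theorem bruhatLE_wordProd_cons_of_length_eq {i : B} {ρ : List B} (hρ : cs.IsReduced (i :: ρ))
    {a u : W} (hu : cs.bruhatLE (cs.wordProd ρ) u)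
    (hlen : cs.length (a * cs.simple i * u) = cs.length a + 1 + cs.length u) :
    cs.bruhatLE (cs.wordProd (i :: ρ)) (a * cs.simple i * u) := by
  obtain ⟨ω, hω, rfl, τ, hτω, hτ, hτρ⟩ := hu
  obtain ⟨α, hα, rfl⟩ := cs.exists_isReduced a
  have hprod : cs.wordProd (α ++ i :: ω) = cs.wordProd α * cs.simple i * cs.wordProd ω := by
    rw [wordProd_append, wordProd_cons, mul_assoc]
  have hρ' : cs.IsReduced ρ := by simpa using hρ.drop 1
  have hτ_len : τ.length = ρ.length := by rw [← hτ.eq, hτρ, hρ'.eq]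
  refine ⟨α ++ i :: ω, ?_, hprod, i :: τ, (hτω.cons_cons i).trans (List.sublist_append_right _ _),
    ?_, by rw [wordProd_cons, wordProd_cons, hτρ]⟩
  · show cs.length _ = _
    rw [hprod, hlen, hα.eq, hω.eq]
    simp only [List.length_append, List.length_cons]
    omega
  · show cs.length _ = _
    rw [wordProd_cons, hτρ, ← wordProd_cons, hρ.eq]
    simp [hτ_len]

theorem exists_forall_length_ge_bruhatLE_wordProd
    (hfin : ∀ i : B, ((Subgroup.closure (cs.simple '' {i}ᶜ) : Subgroup W) : Set W).Finite)
    {ρ : List B} (hρ : cs.IsReduced ρ) :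
    ∃ N : ℕ, ∀ w : W, N ≤ cs.length w → cs.bruhatLE (cs.wordProd ρ) w := by
  induction ρ with
  | nil => exact ⟨0, fun w _ => by simpa using cs.bruhatLE_one_left w⟩
  | cons i ρ ih =>
    obtain ⟨N, hN⟩ := ih (by simpa using hρ.drop 1)
    obtain ⟨C, hC⟩ := ((hfin i).image cs.length).bddAbove
    have hshort : ∀ x ∈ Subgroup.closure (cs.simple '' {i}ᶜ), cs.length x ≤ C :=
      fun x hx => hC (Set.mem_image_of_mem _ hx)
    refine ⟨C + 1 + N, fun w hw => ?_⟩
    have hwP : w ∉ Subgroup.closure (cs.simple '' {i}ᶜ) := fun h => by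
      have := hshort w h; omega
    obtain ⟨a, ha, u, rfl, hlen⟩ := cs.exists_eq_mul_simple_mul_of_notMem_closure hwP
    have := hshort a ha
    exact cs.bruhatLE_wordProd_cons_of_length_eq hρ (hN u (by omega)) hlen

end CoxeterSystem

/-- If every proper standard parabolic subgroup of a Coxeter system (with finitely
many generators) is finite, then every infinite subset is cofinal in the Bruhat order. -/
theorem infinite_subset_cofinal_in_bruhat
    {B W : Type*} [Group W] [Finite B] {M : CoxeterMatrix B} (cs : CoxeterSystem M W)
    (hpar : ∀ I : Set B, I ≠ Set.univ →
      ((Subgroup.closure (cs.simple '' I) : Subgroup W) : Set W).Finite)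
    (V : Set W) (hV : V.Infinite) (σ : W) :
    ∃ v ∈ V, cs.bruhatLE σ v := by
  have hfin : ∀ i : B, ((Subgroup.closure (cs.simple '' {i}ᶜ) : Subgroup W) : Set W).Finite :=
    fun i => hpar _ (Set.compl_ne_univ.2 (Set.singleton_nonempty i))
  obtain ⟨ρ, hρ, rfl⟩ := cs.exists_isReduced σ
  obtain ⟨N, hN⟩ := cs.exists_forall_length_ge_bruhatLE_wordProd hfin hρ
  obtain ⟨v, hvV, hv⟩ := (hV.sdiff (cs.finite_setOf_length_le N)).nonempty
  exact ⟨v, hvV, hN v (le_of_lt (not_le.1 hv))⟩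
end

section
/- Let Φ be a finite reduced crystallographic root system with positive system Φ^+, let β ∈ Φ^+, and let λ be a coweight. Then ℓ^S(s_β λ) < ℓ^S(λ) if and only if β(λ) < 0. -/
open Module

/-- A finite reduced crystallographic root system, spanning the dual of the real vector
space `V`, together with a chosen positive system.  Roots are linear functionals on `V`,
and `coroot` associates to each root its coroot in `V`. -/
structure PosRootSystem (V : Type*) [AddCommGroup V] [Module ℝ V] where
  /-- the set of roots -/
  roots : Finset (Dual ℝ V)
  /-- the set of positive roots -/
  pos : Finset (Dual ℝ V)
  /-- the coroot of a root -/
  coroot : Dual ℝ V → V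
  pos_subset : pos ⊆ roots
  mem_roots_iff : ∀ α, α ∈ roots ↔ (α ∈ pos ∨ -α ∈ pos)
  neg_not_pos : ∀ α ∈ pos, -α ∉ pos
  add_mem_pos : ∀ α ∈ pos, ∀ β ∈ pos, α + β ∈ roots → α + β ∈ pos
  root_coroot_two : ∀ α ∈ roots, α (coroot α) = 2
  crystallographic : ∀ α ∈ roots, ∀ β ∈ roots, ∃ n : ℤ, α (coroot β) = n
  reduced : ∀ α ∈ roots, ∀ c : ℝ, c • α ∈ roots → c = 1 ∨ c = -1
  reflect_mem : ∀ α ∈ roots, ∀ β ∈ roots, α - α (coroot β) • β ∈ roots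
  span_top : Submodule.span ℝ (roots : Set (Dual ℝ V)) = ⊤

namespace PosRootSystem

variable {V : Type*} [AddCommGroup V] [Module ℝ V] (P : PosRootSystem V)

/-- `x` is a coweight: every root takes an integer value on it. -/
def IsCoweight (x : V) : Prop := ∀ α ∈ P.roots, ∃ n : ℤ, α x = n

/-- The function `f(m) = -m` for `m ≤ 0` and `f(m) = m - 1` for `m > 0`. -/
noncomputable def lenAux (m : ℝ) : ℝ := if m ≤ 0 then -m else m - 1

/-- `ℓ^S(x) = Σ_{α ∈ Φ⁺} f(α(x))`, the length of the minimal coset representative of the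
translation `x` in the affine Weyl group modulo the finite Weyl group. -/
noncomputable def lS (x : V) : ℝ := ∑ α ∈ P.pos, lenAux (α x)

/-- The linear reflection `s_β x = x - β(x)·β^∨`. -/
def sRefl (β : Dual ℝ V) (x : V) : V := x - β x • P.coroot β

/-- The affine reflection `r_β x = s_β x + β^∨` in the hyperplane `β = 1`. -/
def rRefl (β : Dual ℝ V) (x : V) : V := P.sRefl β x + P.coroot β

/-- `(α, α')` is a `β`-positive pair: `α, α'` are positive roots with `α(β^∨) < 0`
and `s_β α = α'`. -/
def IsPosPair (β α α' : Dual ℝ V) : Prop :=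
  α ∈ P.pos ∧ α' ∈ P.pos ∧ α (P.coroot β) < 0 ∧ α - α (P.coroot β) • β = α'

/-- `(α, α')` is a `β`-negative pair: `α, α'` are positive roots with `s_β α = -α'`. -/
def IsNegPair (β α α' : Dual ℝ V) : Prop :=
  α ∈ P.pos ∧ α' ∈ P.pos ∧ α - α (P.coroot β) • β = -α'

/-- The opposite sign condition for `(β, x)`: the two members of every `β`-negative pair
take values of strictly opposite signs on `x`. -/
def OppositeSignCondition (β : Dual ℝ V) (x : V) : Prop :=
  ∀ α α' : Dual ℝ V, P.IsNegPair β α α' →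
    (α x < 0 ∧ 0 < α' x) ∨ (0 < α x ∧ α' x < 0)

end PosRootSystem

/-!
Since `f(-m) - f(m) = sign m`, and `s_β` permutes the positive roots outside its inversion set
`N = Φ⁺ ∩ s_β(Φ⁻)` while `-s_β` permutes `N`, we get `ℓ^S(s_β λ) - ℓ^S(λ) = Σ_{α ∈ N} sign α(λ)`.
Pair each `α ∈ N \ {β}` with `-s_β α ∈ N \ {β}`: since `(-s_β α)(λ) = α(β^∨) β(λ) - α(λ)` and
`α(β^∨) > 0` on `N`, every pair contributes at most `0` when `β(λ) ≤ 0`, so the difference is at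
most `sign β(λ)`. Replacing `λ` by `-λ` gives the reverse inequality when `β(λ) ≥ 0`.

Positivity of `α(β^∨)` on `N` holds because no nonempty sum of positive roots vanishes. This rests
on the rank-two fact that `γ(α^∨) < 0` forces `α + γ ∈ Φ` or `γ = -α`: for independent `α, γ` the
orbit of `γ` under `s_γ s_α` follows the Chebyshev recursion with parameter
`t = α(γ^∨) γ(α^∨) - 2`, and is infinite unless `|t| < 2`.
-/

/-- `chebU t (k + 1) = U_k (t / 2)`, where `U_k` is the Chebyshev polynomial of the second kind. -/
def chebU {R : Type*} [Ring R] (t : R) : ℕ → R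
  | 0 => 0
  | 1 => 1
  | k + 2 => t * chebU t (k + 1) - chebU t k

section chebU

variable {R : Type*} [Ring R] [LinearOrder R] [IsStrictOrderedRing R] {t : R}

lemma abs_chebU_lt_abs_chebU_succ (ht : 2 ≤ |t|) (k : ℕ) :
    |chebU t k| < |chebU t (k + 1)| := by
  induction k with
  | zero => simp [chebU]
  | succ k ih =>
    calc |chebU t (k + 1)|
        = 2 * |chebU t (k + 1)| - |chebU t (k + 1)| := by rw [two_mul, add_sub_cancel_right]
      _ < 2 * |chebU t (k + 1)| - |chebU t k| := sub_lt_sub_left ih _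
      _ ≤ |t| * |chebU t (k + 1)| - |chebU t k| :=
        sub_le_sub_right (mul_le_mul_of_nonneg_right ht (abs_nonneg _)) _
      _ ≤ |t * chebU t (k + 1) - chebU t k| := by
        rw [← abs_mul]
        exact abs_sub_abs_le_abs_sub _ _

lemma injective_chebU (ht : 2 ≤ |t|) : Function.Injective (chebU t) :=
  (strictMono_nat_of_lt_succ (abs_chebU_lt_abs_chebU_succ ht)).injective.of_comp (f := abs)

end chebU

lemma Finset.sum_comp_of_involution {ι M : Type*} [AddCommMonoid M] {s : Finset ι}
    (σ : ι → ι) (hσ : ∀ a ∈ s, σ a ∈ s) (hσσ : ∀ a ∈ s, σ (σ a) = a) (g : ι → M) :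
    ∑ a ∈ s, g (σ a) = ∑ a ∈ s, g a :=
  Finset.sum_nbij' σ σ hσ hσ hσσ hσσ fun _ _ => rfl

lemma Real.sign_add_sign_mul_sub_nonpos {a b c : ℝ} (hc : 0 < c) (hb : b ≤ 0) :
    Real.sign a + Real.sign (c * b - a) ≤ 0 := by
  have hcb : c * b ≤ 0 := mul_nonpos_of_nonneg_of_nonpos hc.le hb
  rcases lt_trichotomy a 0 with ha | rfl | ha
  · rw [Real.sign_of_neg ha]
    rcases Real.sign_apply_eq (c * b - a) with h | h | h <;> rw [h] <;> norm_num
  · rw [Real.sign_zero, sub_zero, zero_add]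
    rcases hcb.lt_or_eq with h | h
    · rw [Real.sign_of_neg h]; norm_num
    · rw [h, Real.sign_zero]
  · rw [Real.sign_of_pos ha, Real.sign_of_neg (by linarith)]
    norm_num

namespace PosRootSystem

variable {V : Type*} [AddCommGroup V] [Module ℝ V] {P : PosRootSystem V}

variable (P) in
def rootRefl (γ : Dual ℝ V) : Dual ℝ V →ₗ[ℝ] Dual ℝ V :=
  Module.preReflection γ (Dual.eval ℝ V (P.coroot γ))

lemma rootRefl_apply (γ α : Dual ℝ V) : P.rootRefl γ α = α - α (P.coroot γ) • γ := rfl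

lemma rootRefl_apply_apply (γ α : Dual ℝ V) (x : V) : P.rootRefl γ α x = α (P.sRefl γ x) := by
  simp [rootRefl_apply, sRefl, mul_comm]

lemma rootRefl_apply_self {γ : Dual ℝ V} (hγ : γ ∈ P.roots) : P.rootRefl γ γ = -γ :=
  Module.preReflection_apply_self (P.root_coroot_two γ hγ)

lemma rootRefl_rootRefl {γ : Dual ℝ V} (hγ : γ ∈ P.roots) (α : Dual ℝ V) :
    P.rootRefl γ (P.rootRefl γ α) = α :=
  Module.involutive_preReflection (x := γ) (f := Dual.eval ℝ V (P.coroot γ))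
    (P.root_coroot_two γ hγ) α

lemma rootRefl_mem_roots {γ α : Dual ℝ V} (hγ : γ ∈ P.roots) (hα : α ∈ P.roots) :
    P.rootRefl γ α ∈ P.roots :=
  P.reflect_mem α hα γ hγ

lemma ne_zero_of_mem_roots {α : Dual ℝ V} (hα : α ∈ P.roots) : α ≠ 0 := by
  rintro rfl
  simpa using P.root_coroot_two 0 hα

/-- The orbit of `γ` under `s_γ s_α` is `chebU t (k + 1) • u - chebU t k • γ` with `u = s_γ s_α γ`
and `t = α(γ^∨) γ(α^∨) - 2`; its `α`-coefficients `-γ(α^∨) chebU t (k + 1)` are pairwise distinct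
when `|t| ≥ 2`. -/
lemma abs_pairing_mul_pairing_sub_two_lt {α γ : Dual ℝ V} (hα : α ∈ P.roots)
    (hγ : γ ∈ P.roots) (hind : LinearIndependent ℝ ![α, γ]) (hγα : γ (P.coroot α) ≠ 0) :
    |α (P.coroot γ) * γ (P.coroot α) - 2| < 2 := by
  set n := α (P.coroot γ)
  set d := γ (P.coroot α)
  set t := n * d - 2
  by_contra! ht
  set w := P.rootRefl γ ∘ₗ P.rootRefl α
  have h2α := P.root_coroot_two α hα
  have h2γ := P.root_coroot_two γ hγ
  have hwγ : w γ = (-d) • α + (n * d - 1) • γ := by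
    simp only [w, LinearMap.comp_apply, rootRefl_apply, LinearMap.sub_apply,
      LinearMap.smul_apply, h2γ, smul_eq_mul]
    module
  have hww : w (w γ) = t • w γ - γ := by
    rw [hwγ]
    simp only [w, t, LinearMap.comp_apply, rootRefl_apply, LinearMap.sub_apply, map_add,
      map_smul, LinearMap.smul_apply, h2α, h2γ, smul_eq_mul]
    module
  set orbit : ℕ → Dual ℝ V := fun k => chebU t (k + 1) • w γ - chebU t k • γ
  have horbit_mem : ∀ k, orbit k ∈ P.roots := by
    intro k
    induction k with
    | zero =>
      simp only [orbit, chebU, one_smul, zero_smul, sub_zero]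
      exact rootRefl_mem_roots hγ (rootRefl_mem_roots hα hγ)
    | succ k ih =>
      have hstep : w (orbit k) = orbit (k + 1) := by
        simp only [orbit, map_sub, map_smul, hww, chebU]
        module
      rw [← hstep]
      exact rootRefl_mem_roots hγ (rootRefl_mem_roots hα ih)
  have horbit_inj : Function.Injective orbit := by
    intro i j hij
    have hcoeff := (LinearIndependent.pair_iff.mp hind
      (-d * (chebU t (i + 1) - chebU t (j + 1)))
      ((n * d - 1) * (chebU t (i + 1) - chebU t (j + 1)) - (chebU t i - chebU t j))
      (by simp only [orbit, hwγ] at hij; linear_combination (norm := module) hij)).1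
    have := injective_chebU ht
      (sub_eq_zero.mp ((mul_eq_zero.mp hcoeff).resolve_left (neg_ne_zero.mpr hγα)))
    omega
  exact Set.infinite_of_injective_forall_mem horbit_inj horbit_mem P.roots.finite_toSet

lemma add_mem_roots_or_eq_neg {α γ : Dual ℝ V} (hα : α ∈ P.roots) (hγ : γ ∈ P.roots)
    (hγα : γ (P.coroot α) < 0) : α + γ ∈ P.roots ∨ γ = -α := by
  by_cases hind : LinearIndependent ℝ ![α, γ]
  · left
    obtain ⟨n, hn⟩ := P.crystallographic α hα γ hγ
    obtain ⟨d, hd⟩ := P.crystallographic γ hγ α hα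
    have ht := abs_lt.mp (abs_pairing_mul_pairing_sub_two_lt hα hγ hind hγα.ne)
    rw [hn, hd] at ht
    rw [hd] at hγα
    have hd_neg : d < 0 := by exact_mod_cast hγα
    have hnd_pos : 0 < n * d := by exact_mod_cast (by push_cast; linarith : (0 : ℝ) < (n * d : ℤ))
    have hnd_lt : n * d < 4 := by exact_mod_cast (by push_cast; linarith : ((n * d : ℤ) : ℝ) < 4)
    obtain rfl | rfl : n = -1 ∨ d = -1 := by
      have hn_neg : n < 0 := by nlinarith
      by_contra! hne
      nlinarith [show n ≤ -2 by omega, show d ≤ -2 by omega]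
    · convert rootRefl_mem_roots hγ hα using 1
      rw [rootRefl_apply, hn]
      module
    · convert rootRefl_mem_roots hα hγ using 1
      rw [rootRefl_apply, hd]
      module
  · right
    obtain ⟨c, rfl⟩ : ∃ c : ℝ, c • α = γ := by
      simpa [LinearIndependent.pair_iff' (ne_zero_of_mem_roots hα)] using hind
    obtain rfl | rfl := P.reduced α hα c hγ
    · norm_num [P.root_coroot_two α hα] at hγα
    · exact neg_one_smul ℝ α

lemma multiset_sum_ne_zero_of_forall_mem_pos (s : Multiset (Dual ℝ V))
    (hs : ∀ a ∈ s, a ∈ P.pos) (hne : s ≠ 0) : s.sum ≠ 0 := by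
  classical
  induction hcard : Multiset.card s using Nat.strong_induction_on generalizing s with
  | _ m ih =>
  obtain ⟨a, ha⟩ := Multiset.exists_mem_of_ne_zero hne
  obtain ⟨t, rfl⟩ := Multiset.exists_cons_of_mem ha
  intro hsum
  have haP : a ∈ P.pos := hs a (Multiset.mem_cons_self a t)
  -- `a` pairs to `2` with its own coroot, so some other summand pairs negatively with it
  obtain ⟨b, hbt, hba⟩ : ∃ b ∈ t, b (P.coroot a) < 0 := by
    by_contra! hnonneg
    have hval := congrArg (Dual.eval ℝ V (P.coroot a)) hsum
    rw [Multiset.sum_cons, map_add, map_multiset_sum, map_zero, Dual.eval_apply] at hval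
    have := Multiset.sum_nonneg (s := t.map (Dual.eval ℝ V (P.coroot a))) (by simpa using hnonneg)
    linarith [P.root_coroot_two a (P.pos_subset haP)]
  have hbP : b ∈ P.pos := hs b (Multiset.mem_cons_of_mem hbt)
  have habP : a + b ∈ P.pos := by
    rcases add_mem_roots_or_eq_neg (P.pos_subset haP) (P.pos_subset hbP) hba with hab | rfl
    · exact P.add_mem_pos a haP b hbP hab
    · exact absurd hbP (P.neg_not_pos a haP)
  refine ih (Multiset.card t) (by simp [← hcard]) ((a + b) ::ₘ t.erase b) ?_
    Multiset.cons_ne_zero ?_ ?_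
  · intro c hc
    rcases Multiset.mem_cons.mp hc with rfl | hc
    · exact habP
    · exact hs c (Multiset.mem_cons_of_mem (Multiset.mem_of_mem_erase hc))
  · rw [Multiset.card_cons, Multiset.card_erase_add_one hbt]
  · rwa [Multiset.sum_cons, add_assoc, ← Multiset.sum_cons, Multiset.cons_erase hbt,
      ← Multiset.sum_cons]

variable (P) in
open scoped Classical in
noncomputable def inversions (β : Dual ℝ V) : Finset (Dual ℝ V) :=
  P.pos.filter fun α => P.rootRefl β α ∉ P.pos

variable {β α : Dual ℝ V}

lemma mem_inversions : α ∈ P.inversions β ↔ α ∈ P.pos ∧ P.rootRefl β α ∉ P.pos := by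
  classical
  simp [inversions]

lemma self_mem_inversions (hβ : β ∈ P.pos) : β ∈ P.inversions β :=
  mem_inversions.mpr ⟨hβ, by
    rw [rootRefl_apply_self (P.pos_subset hβ)]
    exact P.neg_not_pos β hβ⟩

lemma neg_rootRefl_mem_inversions (hβ : β ∈ P.roots) (hα : α ∈ P.inversions β) :
    -P.rootRefl β α ∈ P.inversions β := by
  obtain ⟨hαP, hsα⟩ := mem_inversions.mp hα
  refine mem_inversions.mpr ⟨?_, ?_⟩
  · exact ((P.mem_roots_iff _).mp (rootRefl_mem_roots hβ (P.pos_subset hαP))).resolve_left hsα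
  · rw [map_neg, rootRefl_rootRefl hβ]
    exact P.neg_not_pos α hαP

lemma neg_rootRefl_neg_rootRefl (hβ : β ∈ P.roots) (α : Dual ℝ V) :
    -P.rootRefl β (-P.rootRefl β α) = α := by
  rw [map_neg, rootRefl_rootRefl hβ, neg_neg]

lemma pairing_pos_of_mem_inversions (hβ : β ∈ P.pos) (hα : α ∈ P.inversions β) :
    0 < α (P.coroot β) := by
  obtain ⟨c, hc⟩ := P.crystallographic α (P.pos_subset (mem_inversions.mp hα).1) β
    (P.pos_subset hβ)
  rw [hc]
  by_contra! hc_le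
  have hc_nonpos : c ≤ 0 := by exact_mod_cast hc_le
  -- `α + (-s_β α) + (-c) β = 0` would be a vanishing sum of positive roots
  refine multiset_sum_ne_zero_of_forall_mem_pos (P := P)
    (α ::ₘ -P.rootRefl β α ::ₘ Multiset.replicate (-c).toNat β) ?_ Multiset.cons_ne_zero ?_
  · intro a ha
    simp only [Multiset.mem_cons, Multiset.mem_replicate] at ha
    rcases ha with rfl | rfl | ⟨-, rfl⟩
    · exact (mem_inversions.mp hα).1
    · exact (mem_inversions.mp (neg_rootRefl_mem_inversions (P.pos_subset hβ) hα)).1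
    · exact hβ
  · have hcast : (((-c).toNat : ℕ) : ℝ) = -c := by
      rw [← Int.cast_natCast, Int.toNat_of_nonneg (by omega), Int.cast_neg]
    rw [Multiset.sum_cons, Multiset.sum_cons, Multiset.sum_replicate, rootRefl_apply, hc,
      ← Nat.cast_smul_eq_nsmul ℝ, hcast]
    module

lemma lenAux_neg_sub_lenAux (r : ℝ) : lenAux (-r) - lenAux r = Real.sign r := by
  rcases lt_trichotomy r 0 with hr | rfl | hr
  · rw [Real.sign_of_neg hr, lenAux, lenAux, if_neg (by linarith), if_pos hr.le]
    ring
  · simp [lenAux]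
  · rw [Real.sign_of_pos hr, lenAux, lenAux, if_pos (by linarith), if_neg (by linarith)]
    ring

lemma lS_sRefl_sub_lS (hβ : β ∈ P.roots) (x : V) :
    P.lS (P.sRefl β x) - P.lS x = ∑ α ∈ P.inversions β, Real.sign (α x) := by
  classical
  set C := P.pos.filter fun α => P.rootRefl β α ∈ P.pos
  have hsplit : ∀ g : Dual ℝ V → ℝ,
      ∑ α ∈ P.pos, g α = ∑ α ∈ C, g α + ∑ α ∈ P.inversions β, g α := fun g =>
    (Finset.sum_filter_add_sum_filter_not _ _ _).symm
  have hC : ∑ α ∈ C, lenAux (P.rootRefl β α x) = ∑ α ∈ C, lenAux (α x) := by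
    refine Finset.sum_comp_of_involution (P.rootRefl β) (fun α hα => ?_)
      (fun α _ => rootRefl_rootRefl hβ α) (fun α => lenAux (α x))
    obtain ⟨hαP, hsα⟩ := Finset.mem_filter.mp hα
    exact Finset.mem_filter.mpr ⟨hsα, by rwa [rootRefl_rootRefl hβ]⟩
  have hN : ∑ α ∈ P.inversions β, lenAux (P.rootRefl β α x) =
      ∑ α ∈ P.inversions β, lenAux (-α x) := by
    simpa [neg_rootRefl_neg_rootRefl hβ] using Finset.sum_comp_of_involution
      (fun α => -P.rootRefl β α) (fun α => neg_rootRefl_mem_inversions hβ)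
      (fun α _ => neg_rootRefl_neg_rootRefl hβ α) (fun α => lenAux (-α x))
  simp only [lS, ← rootRefl_apply_apply]
  rw [hsplit, hsplit, hC, hN, add_sub_add_left_eq_sub, ← Finset.sum_sub_distrib]
  simp only [lenAux_neg_sub_lenAux]

lemma sum_sign_inversions_le (hβ : β ∈ P.pos) {x : V} (hx : β x ≤ 0) :
    ∑ α ∈ P.inversions β, Real.sign (α x) ≤ Real.sign (β x) := by
  classical
  have hβR := P.pos_subset hβ
  set E := (P.inversions β).erase β
  set ι : Dual ℝ V → Dual ℝ V := fun α => -P.rootRefl β α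
  have hιE : ∀ α ∈ E, ι α ∈ E := by
    intro α hα
    obtain ⟨hne, hαN⟩ := Finset.mem_erase.mp hα
    refine Finset.mem_erase.mpr ⟨fun h => hne ?_, neg_rootRefl_mem_inversions hβR hαN⟩
    rw [← neg_rootRefl_neg_rootRefl hβR α]
    simp only [ι] at h
    rw [h, rootRefl_apply_self hβR, neg_neg]
  have hpair : ∀ α ∈ E, Real.sign (α x) + Real.sign (ι α x) ≤ 0 := by
    intro α hα
    have hια : ι α x = α (P.coroot β) * β x - α x := by
      simp [ι, rootRefl_apply]
    rw [hια]
    exact Real.sign_add_sign_mul_sub_nonpos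
      (pairing_pos_of_mem_inversions hβ (Finset.mem_of_mem_erase hα)) hx
  have hE : ∑ α ∈ E, Real.sign (α x) ≤ 0 := by
    have h2 := Finset.sum_comp_of_involution ι hιE
      (fun α _ => neg_rootRefl_neg_rootRefl hβR α) (fun α => Real.sign (α x))
    have := Finset.sum_nonpos hpair
    rw [Finset.sum_add_distrib, h2] at this
    linarith
  rw [← Finset.add_sum_erase _ _ (self_mem_inversions hβ)]
  linarith

lemma sign_le_sum_sign_inversions (hβ : β ∈ P.pos) {x : V} (hx : 0 ≤ β x) :
    Real.sign (β x) ≤ ∑ α ∈ P.inversions β, Real.sign (α x) := by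
  simpa [Real.sign_neg] using sum_sign_inversions_le hβ (x := -x) (by simpa using hx)

end PosRootSystem

theorem lS_sRefl_lt_iff_general {V : Type*} [AddCommGroup V] [Module ℝ V] (P : PosRootSystem V)
    (β : Module.Dual ℝ V) (hβ : β ∈ P.pos) (x : V) :
    P.lS (P.sRefl β x) < P.lS x ↔ β x < 0 := by
  rw [← sub_neg, P.lS_sRefl_sub_lS (P.pos_subset hβ)]
  refine ⟨fun hlt => ?_, fun hx => ?_⟩
  · by_contra! hx
    have hle := P.sign_le_sum_sign_inversions hβ hx
    rcases hx.eq_or_lt with h | h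
    · rw [← h, Real.sign_zero] at hle
      linarith
    · rw [Real.sign_of_pos h] at hle
      linarith
  · calc ∑ α ∈ P.inversions β, Real.sign (α x) ≤ Real.sign (β x) :=
          P.sum_sign_inversions_le hβ hx.le
      _ < 0 := by rw [Real.sign_of_neg hx]; norm_num

/-- `ℓ^S(s_β λ) < ℓ^S(λ)` if and only if `β(λ) < 0`. -/
theorem lS_sRefl_lt_iff {V : Type*} [AddCommGroup V] [Module ℝ V] (P : PosRootSystem V)
    (β : Module.Dual ℝ V) (hβ : β ∈ P.pos) (x : V) (hx : P.IsCoweight x) :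
    P.lS (P.sRefl β x) < P.lS x ↔ β x < 0 :=
  lS_sRefl_lt_iff_general P β hβ x
end

section
/- Let Φ be a finite reduced crystallographic root system with positive system Φ^+, let β ∈ Φ^+, and let λ be a coweight. Then ℓ^S(r_β λ) < ℓ^S(λ) if and only if 1 − β(λ) < 0. -/
open Module

namespace PosRootSystem

variable {V : Type*} [AddCommGroup V] [Module ℝ V] (P : PosRootSystem V)

lemma abs_key (u s t : ℝ) (h : 0 ≤ s * t) : |u - s| + |u - t| ≤ |u| + |u - s - t| := by
  rcases abs_cases u with ⟨h1, h1'⟩ | ⟨h1, h1'⟩ <;>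
  rcases abs_cases (u - s) with ⟨h2, h2'⟩ | ⟨h2, h2'⟩ <;>
  rcases abs_cases (u - t) with ⟨h3, h3'⟩ | ⟨h3, h3'⟩ <;>
  rcases abs_cases (u - s - t) with ⟨h4, h4'⟩ | ⟨h4, h4'⟩ <;>
  rw [h1, h2, h3, h4] <;> nlinarith [h]

lemma abs_key' (u s t x1 x2 x3 x4 : ℝ) (h : 0 ≤ s * t)
    (e1 : |x1| = |u - s|) (e2 : |x2| = |u - t|) (e3 : |x3| = |u|)
    (e4 : |x4| = |u - s - t|) : |x1| + |x2| ≤ |x3| + |x4| := by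
  rw [e1, e2, e3, e4]; exact abs_key u s t h

lemma lenAux_int (n : ℤ) : lenAux (n : ℝ) = (|2 * (n : ℝ) - 1| - 1) / 2 := by
  unfold lenAux
  split_ifs with h
  · rw [abs_of_nonpos (by linarith)]; ring
  · push_neg at h
    have h1 : (1 : ℝ) ≤ (n : ℝ) := by exact_mod_cast (by exact_mod_cast h : (0:ℤ) < n)
    rw [abs_of_nonneg (by linarith)]; ring

lemma lenAux_eq_of_int (y : ℝ) (n : ℤ) (hy : y = n) : lenAux y = (|2 * y - 1| - 1) / 2 := by
  subst hy; exact lenAux_int n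

lemma core_pos (a m k : ℝ) (ha : ∃ n : ℤ, a = n) (hm : ∃ n : ℤ, m = n) (hk : ∃ n : ℤ, k = n)
    (hk1 : 1 ≤ k) :
    lenAux (a - k * m) + lenAux (a - m) ≤ lenAux a + lenAux (a - m * (k + 1)) := by
  obtain ⟨A, hA⟩ := ha; obtain ⟨M, hM⟩ := hm; obtain ⟨K, hK⟩ := hk
  rw [lenAux_eq_of_int (a - k*m) (A - K*M) (by push_cast [hA,hM,hK]; ring),
      lenAux_eq_of_int (a - m) (A - M) (by push_cast [hA,hM]; ring),
      lenAux_eq_of_int a A hA,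
      lenAux_eq_of_int (a - m*(k+1)) (A - M*(K+1)) (by push_cast [hA,hM,hK]; ring)]
  have H := abs_key' (2*a - 1) (2*k*m) (2*m) (2*(a - k*m) - 1) (2*(a - m) - 1) (2*a - 1)
      (2*(a - m*(k+1)) - 1)
      (by nlinarith [sq_nonneg m]) (by ring_nf) (by ring_nf) rfl (by ring_nf)
  linarith

lemma core_neg (a m k : ℝ) (ha : ∃ n : ℤ, a = n) (hm : ∃ n : ℤ, m = n) (hk : ∃ n : ℤ, k = n)
    (hk1 : 1 ≤ k) :
    lenAux (a - k * m) + lenAux (m - a) ≤ lenAux a + lenAux (m * (k + 1) - a) := by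
  obtain ⟨A, hA⟩ := ha; obtain ⟨M, hM⟩ := hm; obtain ⟨K, hK⟩ := hk
  have hMM : (0:ℝ) ≤ m * (m - 1) := by
    have h0 : (0:ℤ) ≤ M * (M - 1) := by rcases le_or_gt M 0 with h | h <;> nlinarith
    have h2 : (0:ℝ) ≤ (M:ℝ) * ((M:ℝ) - 1) := by exact_mod_cast h0
    rw [hM]; nlinarith [h2]
  rw [lenAux_eq_of_int (a - k*m) (A - K*M) (by push_cast [hA,hM,hK]; ring),
      lenAux_eq_of_int (m - a) (M - A) (by push_cast [hA,hM]; ring),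
      lenAux_eq_of_int a A hA,
      lenAux_eq_of_int (m*(k+1) - a) (M*(K+1) - A) (by push_cast [hA,hM,hK]; ring)]
  have H := abs_key' (2*a - 1) (2*k*m) (2*m - 2) (2*(a - k*m) - 1) (2*(m - a) - 1) (2*a - 1)
      (2*(m*(k+1) - a) - 1)
      (by nlinarith) (by ring_nf)
      (by rw [show 2*(m-a) - 1 = -((2*a-1) - (2*m-2)) by ring, abs_neg])
      rfl
      (by rw [show 2*(m*(k+1)-a) - 1 = -((2*a-1) - 2*k*m - (2*m-2)) by ring, abs_neg])
  linarith

lemma rRefl_apply (β : Dual ℝ V) (x : V) (α : Dual ℝ V) :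
    α (P.rRefl β x) = α x - (β x - 1) * α (P.coroot β) := by
  simp only [rRefl, sRefl, map_add, map_sub, map_smul, smul_eq_mul]
  ring

lemma rRefl_rRefl (β : Dual ℝ V) (x : V) (hβ2 : β (P.coroot β) = 2) :
    P.rRefl β (P.rRefl β x) = x := by
  have h2 : β (P.rRefl β x) = 2 - β x := by rw [P.rRefl_apply, hβ2]; ring
  show P.sRefl β (P.rRefl β x) + P.coroot β = x
  unfold sRefl
  rw [h2]
  show (P.sRefl β x + P.coroot β) - (2 - β x) • P.coroot β + P.coroot β = x
  unfold sRefl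
  module

lemma isCoweight_rRefl (β : Dual ℝ V) (hβr : β ∈ P.roots) (x : V) (hx : P.IsCoweight x) :
    P.IsCoweight (P.rRefl β x) := by
  intro α hαr
  obtain ⟨a, ha⟩ := hx α hαr
  obtain ⟨m, hm⟩ := P.crystallographic α hαr β hβr
  obtain ⟨n, hn⟩ := hx β hβr
  exact ⟨a - (n - 1) * m, by rw [P.rRefl_apply, ha, hm, hn]; push_cast; ring⟩

lemma lS_rRefl_lt (β : Dual ℝ V) (hβ : β ∈ P.pos) (x : V) (hx : P.IsCoweight x)
    (h1 : 1 < β x) : P.lS (P.rRefl β x) < P.lS x := by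
  classical
  have hβr := P.pos_subset hβ
  have hβ2 := P.root_coroot_two β hβr
  obtain ⟨n, hn⟩ := hx β hβr
  set k : ℤ := n - 1 with hkdef
  have hk : 1 ≤ k := by
    have : (1:ℝ) < (n:ℝ) := by rw [← hn]; exact h1
    have : (1:ℤ) < n := by exact_mod_cast this
    omega
  have hkR : (1:ℝ) ≤ (k:ℝ) := by exact_mod_cast hk
  have hβx : β x = (k:ℝ) + 1 := by rw [hn, hkdef]; push_cast; ring
  set rx := P.rRefl β x with hrx
  have happ : ∀ α : Dual ℝ V, α rx = α x - (k:ℝ) * α (P.coroot β) := by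
    intro α; rw [hrx, P.rRefl_apply, hβx]; ring
  set g : Dual ℝ V → ℝ := fun α => lenAux (α rx) - lenAux (α x) with hg
  have hsum : P.lS rx - P.lS x = ∑ α ∈ P.pos, g α := by
    rw [lS, lS, ← Finset.sum_sub_distrib]
  have hgβ : g β = -1 := by
    have h2 : β rx = 1 - (k:ℝ) := by rw [happ β, hβx, hβ2]; ring
    have e1 : lenAux (β rx) = (k:ℝ) - 1 := by
      rw [h2]; unfold lenAux; rw [if_pos (by linarith)]; ring
    have e2 : lenAux (β x) = (k:ℝ) := by
      rw [hβx]; unfold lenAux; rw [if_neg (by push_neg; linarith)]; ring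
    simp only [hg, e1, e2]; ring
  set E := P.pos.erase β with hE
  set τ : Dual ℝ V → Dual ℝ V := fun α =>
    if α - α (P.coroot β) • β ∈ P.pos then α - α (P.coroot β) • β
    else -(α - α (P.coroot β) • β) with hτ
  have hsval : ∀ α : Dual ℝ V, (α - α (P.coroot β) • β) (P.coroot β) = -(α (P.coroot β)) := by
    intro α
    simp only [LinearMap.sub_apply, LinearMap.smul_apply, smul_eq_mul, hβ2]
    ring
  have hsinv : ∀ α : Dual ℝ V,
      (α - α (P.coroot β) • β) - ((α - α (P.coroot β) • β) (P.coroot β)) • β = α := by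
    intro α
    rw [hsval α]
    module
  have hsneg : ∀ γ : Dual ℝ V, (-γ) - (-γ) (P.coroot β) • β = -(γ - γ (P.coroot β) • β) := by
    intro γ
    simp only [LinearMap.neg_apply]
    module
  have hτmem : ∀ α ∈ E, τ α ∈ E := by
    intro α hαE
    obtain ⟨hne, hα⟩ := Finset.mem_erase.1 hαE
    have hsr := P.reflect_mem α (P.pos_subset hα) β hβr
    by_cases hs : α - α (P.coroot β) • β ∈ P.pos
    · have hτα : τ α = α - α (P.coroot β) • β := by rw [hτ]; exact if_pos hs
      rw [hτα]
      refine Finset.mem_erase.2 ⟨?_, hs⟩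
      intro hEq
      have hαval : α = -β := by
        have := hsinv α
        rw [hEq, hβ2] at this
        rw [← this]; module
      exact P.neg_not_pos α hα (by rw [hαval, neg_neg]; exact hβ)
    · have hsneg' : -(α - α (P.coroot β) • β) ∈ P.pos := by
        rcases (P.mem_roots_iff _).1 hsr with h | h
        · exact absurd h hs
        · exact h
      have hτα : τ α = -(α - α (P.coroot β) • β) := by rw [hτ]; exact if_neg hs
      rw [hτα]
      refine Finset.mem_erase.2 ⟨?_, hsneg'⟩
      intro hEq
      have hβs : α - α (P.coroot β) • β = -β := by
        rw [← neg_neg (α - α (P.coroot β) • β), hEq]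
      have hαval : α = β := by
        have := hsinv α
        rw [hβs] at this
        simp only [LinearMap.neg_apply, hβ2] at this
        rw [← this]; module
      exact hne hαval
  have hτinv : ∀ α ∈ E, τ (τ α) = α := by
    intro α hαE
    obtain ⟨hne, hα⟩ := Finset.mem_erase.1 hαE
    by_cases hs : α - α (P.coroot β) • β ∈ P.pos
    · have hτα : τ α = α - α (P.coroot β) • β := by rw [hτ]; exact if_pos hs
      rw [hτα, hτ]
      simp only [hsinv α]
      exact if_pos hα
    · have hτα : τ α = -(α - α (P.coroot β) • β) := by rw [hτ]; exact if_neg hs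
      rw [hτα, hτ]
      simp only [hsneg (α - α (P.coroot β) • β), hsinv α]
      rw [if_neg (P.neg_not_pos α hα), neg_neg]
  have hpair : ∀ α ∈ E, g α + g (τ α) ≤ 0 := by
    intro α hαE
    obtain ⟨hne, hα⟩ := Finset.mem_erase.1 hαE
    obtain ⟨A, hA⟩ := hx α (P.pos_subset hα)
    obtain ⟨M, hM⟩ := P.crystallographic α (P.pos_subset hα) β hβr
    have hsx : (α - α (P.coroot β) • β) x = α x - α (P.coroot β) * ((k:ℝ) + 1) := by
      simp only [LinearMap.sub_apply, LinearMap.smul_apply, smul_eq_mul, hβx]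
    by_cases hs : α - α (P.coroot β) • β ∈ P.pos
    · have hτα : τ α = α - α (P.coroot β) • β := by rw [hτ]; exact if_pos hs
      have hv1 : (α - α (P.coroot β) • β) rx = α x - α (P.coroot β) := by
        rw [happ _, hsval α, hsx]; ring
      have hcore := core_pos (α x) (α (P.coroot β)) (k:ℝ) ⟨A, hA⟩ ⟨M, hM⟩ ⟨k, rfl⟩ hkR
      simp only [hg, hτα, happ α, hv1, hsx]
      linarith
    · have hτα : τ α = -(α - α (P.coroot β) • β) := by rw [hτ]; exact if_neg hs
      have hnx : (-(α - α (P.coroot β) • β)) x = α (P.coroot β) * ((k:ℝ) + 1) - α x := by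
        simp only [LinearMap.neg_apply, hsx]; ring
      have hv1 : (-(α - α (P.coroot β) • β)) rx = α (P.coroot β) - α x := by
        rw [happ _]
        simp only [LinearMap.neg_apply, hsval α, hsx]
        ring
      have hcore := core_neg (α x) (α (P.coroot β)) (k:ℝ) ⟨A, hA⟩ ⟨M, hM⟩ ⟨k, rfl⟩ hkR
      simp only [hg, hτα, happ α, hv1, hnx]
      linarith
  have hperm : ∑ α ∈ E, g (τ α) = ∑ α ∈ E, g α :=
    Finset.sum_nbij' τ τ hτmem hτmem hτinv hτinv (fun a _ => rfl)
  have hEsum : ∑ α ∈ E, (g α + g (τ α)) ≤ 0 := Finset.sum_nonpos hpair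
  have hS : ∑ α ∈ E, g α ≤ 0 := by
    rw [Finset.sum_add_distrib, hperm] at hEsum; linarith
  have htotal : ∑ α ∈ P.pos, g α < 0 := by
    rw [← Finset.add_sum_erase P.pos g hβ, hgβ, ← hE]
    linarith
  linarith [hsum, htotal]

end PosRootSystem

/-- `ℓ^S(r_β λ) < ℓ^S(λ)` if and only if `1 − β(λ) < 0`. -/
theorem lS_rRefl_lt_iff {V : Type*} [AddCommGroup V] [Module ℝ V] (P : PosRootSystem V)
    (β : Module.Dual ℝ V) (hβ : β ∈ P.pos) (x : V) (hx : P.IsCoweight x) :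
    P.lS (P.rRefl β x) < P.lS x ↔ 1 - β x < 0 := by
  have hβr := P.pos_subset hβ
  have hβ2 := P.root_coroot_two β hβr
  rcases lt_trichotomy (β x) 1 with hlt | heq | hgt
  · have hx' := P.isCoweight_rRefl β hβr x hx
    have h2 : β (P.rRefl β x) = 2 - β x := by rw [P.rRefl_apply, hβ2]; ring
    have hlt2 : 1 < β (P.rRefl β x) := by rw [h2]; linarith
    have hlS := P.lS_rRefl_lt β hβ (P.rRefl β x) hx' hlt2
    rw [P.rRefl_rRefl β x hβ2] at hlS
    exact iff_of_false (not_lt.2 hlS.le) (by linarith)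
  · have hfix : P.rRefl β x = x := by
      show P.sRefl β x + P.coroot β = x
      unfold PosRootSystem.sRefl
      rw [heq]
      module
    rw [hfix]
    exact iff_of_false (lt_irrefl _) (by linarith)
  · exact iff_of_true (P.lS_rRefl_lt β hβ x hx hgt) (by linarith)
end

section
/- Let Φ be an irreducible finite reduced crystallographic root system with positive system Φ^+ and highest root α_0, and let λ be a nonzero element of the coroot lattice (the ℤ-span of the coroots) which is dominant, i.e. α(λ) ≥ 0 for all α ∈ Φ^+. Then α_0(λ) ≥ 2. -/
open Module

/-- `θ` is the highest root: `θ` is a positive root and `θ − α` is a nonnegative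
combination of positive roots for every root `α`.  (For a finite reduced crystallographic
root system this holds precisely when the system is irreducible and `θ` is its highest
root.) -/
def PosRootSystem.IsHighestRoot {V : Type*} [AddCommGroup V] [Module ℝ V]
    (P : PosRootSystem V) (θ : Module.Dual ℝ V) : Prop :=
  θ ∈ P.pos ∧ ∀ α ∈ P.roots,
    θ - α ∈ AddSubmonoid.closure (P.pos : Set (Module.Dual ℝ V))

/-!
If `θ(x) ≤ 1`, then every root is at most `1` on `x`, since `θ - α` is a sum of positive roots
and `x` is dominant. No nonzero element of the coroot lattice has this property. Write `x` as a
sum of coroots and their negatives. The Weyl-invariant form `(x, y) = ∑_α α(x) α(y)` is positive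
definite, so some summand `y = ±β^∨` has `(x, y) > 0`. Integrality then forces `β(x) = ±1` with
the sign of `y`, that is, `s_β x = x - y`. Since `s_β` permutes the roots, `s_β x` satisfies the
same bound and is a sum with fewer terms, so induction on the number of terms gives `x = 0`.
-/

namespace PosRootSystem

variable {V : Type*} [AddCommGroup V] [Module ℝ V] (P : PosRootSystem V)

def corootLattice : AddSubgroup V :=
  AddSubgroup.closure (P.coroot '' (P.roots : Set (Dual ℝ V)))

theorem neg_mem_roots {α : Dual ℝ V} (hα : α ∈ P.roots) : -α ∈ P.roots := by
  rw [P.mem_roots_iff, neg_neg]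
  exact (P.mem_roots_iff α |>.mp hα).symm

theorem isCoweight_of_mem_corootLattice {x : V} (hx : x ∈ P.corootLattice) : P.IsCoweight x := by
  induction hx using AddSubgroup.closure_induction with
  | mem y hy =>
    obtain ⟨β, hβ, rfl⟩ := hy
    exact fun α hα => P.crystallographic α hα β hβ
  | zero => exact fun α _ => ⟨0, by simp⟩
  | add y z _ _ hy hz =>
    intro α hα
    obtain ⟨m, hm⟩ := hy α hα
    obtain ⟨n, hn⟩ := hz α hα
    exact ⟨m + n, by simp [hm, hn]⟩
  | neg y _ hy =>
    intro α hα
    obtain ⟨m, hm⟩ := hy α hα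
    exact ⟨-m, by simp [hm]⟩

theorem apply_sRefl (α β : Dual ℝ V) (x : V) :
    α (P.sRefl β x) = (α - α (P.coroot β) • β) x := by
  simp only [sRefl, map_sub, map_smul, LinearMap.sub_apply, LinearMap.smul_apply, smul_eq_mul]
  ring

theorem sRefl_sRefl {β : Dual ℝ V} (hβ : β ∈ P.roots) (x : V) :
    P.sRefl β (P.sRefl β x) = x := by
  simp only [sRefl, map_sub, map_smul, smul_eq_mul, P.root_coroot_two β hβ]
  module

theorem sRefl_coroot {β : Dual ℝ V} (hβ : β ∈ P.roots) :
    P.sRefl β (P.coroot β) = -P.coroot β := by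
  rw [sRefl, P.root_coroot_two β hβ, two_smul]
  abel

theorem sum_roots_comp_reflect {β : Dual ℝ V} (hβ : β ∈ P.roots) (g : Dual ℝ V → ℝ) :
    ∑ α ∈ P.roots, g (α - α (P.coroot β) • β) = ∑ α ∈ P.roots, g α := by
  have hrefl (α : Dual ℝ V) : (α - α (P.coroot β) • β) -
      (α - α (P.coroot β) • β) (P.coroot β) • β = α := by
    simp only [LinearMap.sub_apply, LinearMap.smul_apply, smul_eq_mul, P.root_coroot_two β hβ]
    module
  exact Finset.sum_nbij' _ _ (fun α hα => P.reflect_mem α hα β hβ)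
    (fun α hα => P.reflect_mem α hα β hβ) (fun α _ => hrefl α) (fun α _ => hrefl α)
    (fun _ _ => rfl)

def rootForm : LinearMap.BilinForm ℝ V := ∑ α ∈ P.roots, LinearMap.BilinForm.linMulLin α α

theorem rootForm_apply (x y : V) : P.rootForm x y = ∑ α ∈ P.roots, α x * α y := by
  simp [rootForm, LinearMap.BilinForm.linMulLin]

theorem rootForm_sRefl {β : Dual ℝ V} (hβ : β ∈ P.roots) (x y : V) :
    P.rootForm (P.sRefl β x) (P.sRefl β y) = P.rootForm x y := by
  rw [rootForm_apply, rootForm_apply]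
  simp only [apply_sRefl]
  exact P.sum_roots_comp_reflect hβ fun α => α x * α y

theorem eq_zero_of_forall_root_eq_zero {x : V} (h : ∀ α ∈ P.roots, α x = 0) : x = 0 := by
  rw [← Module.forall_dual_apply_eq_zero_iff ℝ x]
  intro φ
  have hφ : φ ∈ Submodule.span ℝ (P.roots : Set (Dual ℝ V)) := P.span_top ▸ trivial
  induction hφ using Submodule.span_induction with
  | mem f hf => exact h f hf
  | zero => simp
  | add f g _ _ hf hg => simp [hf, hg]
  | smul a f _ hf => simp [hf]

theorem rootForm_self_pos {x : V} (hx : x ≠ 0) : 0 < P.rootForm x x := by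
  rw [rootForm_apply]
  refine lt_of_le_of_ne (Finset.sum_nonneg fun α _ => mul_self_nonneg (α x)) fun h => hx ?_
  refine P.eq_zero_of_forall_root_eq_zero fun α hα => mul_self_eq_zero.mp ?_
  exact (Finset.sum_eq_zero_iff_of_nonneg fun α _ => mul_self_nonneg (α x)).mp h.symm α hα

theorem rootForm_coroot_self_pos {β : Dual ℝ V} (hβ : β ∈ P.roots) :
    0 < P.rootForm (P.coroot β) (P.coroot β) := by
  have hle := Finset.single_le_sum (fun α _ => mul_self_nonneg (α (P.coroot β))) hβ
  rw [← rootForm_apply, P.root_coroot_two β hβ] at hle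
  linarith

theorem two_mul_rootForm_coroot {β : Dual ℝ V} (hβ : β ∈ P.roots) (x : V) :
    2 * P.rootForm x (P.coroot β) = β x * P.rootForm (P.coroot β) (P.coroot β) := by
  have h := P.rootForm_sRefl hβ x (P.coroot β)
  rw [P.sRefl_coroot hβ, sRefl] at h
  simp only [map_neg, LinearMap.map_sub₂, LinearMap.map_smul₂, smul_eq_mul] at h
  linarith

theorem smul_coroot_eq_of_rootForm_pos {β : Dual ℝ V} (hβ : β ∈ P.roots) {x y : V}
    (hx : x ∈ P.corootLattice) (hle : ∀ α ∈ P.roots, α x ≤ 1)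
    (hy : y = P.coroot β ∨ y = -P.coroot β) (hpos : 0 < P.rootForm x y) :
    β x • P.coroot β = y := by
  obtain ⟨n, hn⟩ := P.isCoweight_of_mem_corootLattice hx β hβ
  have hradial := P.two_mul_rootForm_coroot hβ x
  have hQ := P.rootForm_coroot_self_pos hβ
  have hup : n ≤ 1 := by exact_mod_cast hn ▸ hle β hβ
  have hlow : -1 ≤ n := by
    have h := hle (-β) (P.neg_mem_roots hβ)
    rw [LinearMap.neg_apply, hn] at h
    exact_mod_cast neg_le.mp h
  rcases hy with rfl | rfl
  · have hn_pos : 0 < n := by exact_mod_cast (show (0 : ℝ) < n by nlinarith)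
    simp [hn, show n = 1 by omega]
  · rw [map_neg] at hpos
    have hn_neg : n < 0 := by exact_mod_cast (show (n : ℝ) < 0 by nlinarith)
    simp [hn, show n = -1 by omega]

theorem list_sum_eq_zero_of_forall_root_le_one (l : List V)
    (hl : ∀ y ∈ l, y ∈ P.coroot '' (P.roots : Set (Dual ℝ V)) ∪ -(P.coroot '' P.roots))
    (hle : ∀ α ∈ P.roots, α l.sum ≤ 1) : l.sum = 0 := by
  by_contra hne
  have hlat : l.sum ∈ P.corootLattice := by
    rw [corootLattice, ← AddSubgroup.mem_toAddSubmonoid, AddSubgroup.closure_toAddSubmonoid]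
    exact (AddSubmonoid.closure _).list_sum_mem fun y hy => AddSubmonoid.subset_closure (hl y hy)
  obtain ⟨y, hy, hpos⟩ : ∃ y ∈ l, 0 < P.rootForm l.sum y := by
    have h := P.rootForm_self_pos hne
    rw [map_list_sum] at h
    exact List.exists_lt_of_sum_lt (fun _ => 0) _ (by simpa using h)
  obtain ⟨β, hβ, hyβ⟩ : ∃ β ∈ P.roots, y = P.coroot β ∨ y = -P.coroot β := by
    rcases hl y hy with ⟨β, hβ, rfl⟩ | ⟨β, hβ, hβy⟩
    · exact ⟨β, hβ, Or.inl rfl⟩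
    · exact ⟨β, hβ, Or.inr (neg_eq_iff_eq_neg.mp hβy.symm)⟩
  have hrefl := P.smul_coroot_eq_of_rootForm_pos hβ hlat hle hyβ hpos
  obtain ⟨s, t, rfl⟩ := List.append_of_mem hy
  have hsum : (s ++ t).sum = P.sRefl β (s ++ y :: t).sum := by
    rw [sRefl, hrefl]
    simp only [List.sum_append, List.sum_cons]
    abel
  have hzero : (s ++ t).sum = 0 := by
    refine list_sum_eq_zero_of_forall_root_le_one (s ++ t) (fun z hz => hl z ?_) fun α hα => ?_
    · simp only [List.mem_append, List.mem_cons] at hz ⊢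
      tauto
    · rw [hsum, apply_sRefl]
      exact hle _ (P.reflect_mem α hα β hβ)
  apply hne
  rw [← P.sRefl_sRefl hβ (s ++ y :: t).sum, ← hsum, hzero, sRefl]
  simp
termination_by l.length
decreasing_by subst_vars; simp

theorem eq_zero_of_mem_corootLattice_of_forall_root_le_one {x : V} (hx : x ∈ P.corootLattice)
    (hle : ∀ α ∈ P.roots, α x ≤ 1) : x = 0 := by
  rw [corootLattice, ← AddSubgroup.mem_toAddSubmonoid, AddSubgroup.closure_toAddSubmonoid] at hx
  obtain ⟨l, hl, rfl⟩ := AddSubmonoid.exists_list_of_mem_closure hx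
  exact P.list_sum_eq_zero_of_forall_root_le_one l hl hle

theorem root_apply_le_highestRoot_apply {θ : Dual ℝ V} (hθ : P.IsHighestRoot θ) {x : V}
    (hdom : ∀ α ∈ P.pos, 0 ≤ α x) {α : Dual ℝ V} (hα : α ∈ P.roots) :
    α x ≤ θ x := by
  suffices h : ∀ f ∈ AddSubmonoid.closure (P.pos : Set (Dual ℝ V)), 0 ≤ f x by
    simpa using h _ (hθ.2 α hα)
  intro f hf
  induction hf using AddSubmonoid.closure_induction with
  | mem g hg => exact hdom g hg
  | zero => simp
  | add g h _ _ hg hh => simpa using add_nonneg hg hh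

end PosRootSystem

/-- If `λ` is a nonzero dominant element of the coroot lattice of an irreducible finite
reduced crystallographic root system with highest root `α₀`, then `α₀(λ) ≥ 2`. -/
theorem highestRoot_ge_two_of_dominant {V : Type*} [AddCommGroup V] [Module ℝ V]
    (P : PosRootSystem V) (θ : Module.Dual ℝ V) (hθ : P.IsHighestRoot θ)
    (x : V)
    (hlat : x ∈ AddSubgroup.closure (P.coroot '' (P.roots : Set (Module.Dual ℝ V))))
    (hx0 : x ≠ 0)
    (hdom : ∀ α ∈ P.pos, 0 ≤ α x) :
    2 ≤ θ x := by
  obtain ⟨n, hn⟩ := P.isCoweight_of_mem_corootLattice hlat θ (P.pos_subset hθ.1)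
  by_contra! hlt
  have hle_one : θ x ≤ 1 := by
    rw [hn] at hlt ⊢
    have hn2 : n < 2 := by exact_mod_cast hlt
    exact_mod_cast (by omega : n ≤ 1)
  exact hx0 <| P.eq_zero_of_mem_corootLattice_of_forall_root_le_one hlat fun α hα =>
    (P.root_apply_le_highestRoot_apply hθ hdom hα).trans hle_one
end

section
/- Let I ⊊ S be a proper subset of the simple roots of a finite reduced crystallographic root system Φ with base {α_s : s ∈ S} such that the sub-root system Φ_I = Φ ∩ ℤ-span{α_s : s ∈ I} is irreducible, and let α_I denote the highest root of Φ_I. Let λ be a coweight with α_I(λ) ≥ 2 such that the positive pair condition holds for β = α_I: for every α_I-positive pair (α, α′) of positive roots of Φ, either α(λ) > 0 or α′(λ) ≤ 0. Then ℓ^S(r_{α_I} λ) = ℓ^S(λ) − 1. -/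
open Module

/-!
Write `y = r_β x` and `c = β(x) ≥ 2`, so that `α(y) = α(x) + (1 - c) α(β^∨)`. Sending a
positive root `α` to whichever of `± s_β α` is positive is an involution of `Φ⁺` fixing `β`,
and the changes `f(α(y)) - f(α(x))` cancel along each of its orbits other than `{β}`:
* if `α` and `s_β α` are both positive, the positive pair condition puts the four values
  `α(x), α(y), (s_β α)(x), (s_β α)(y)` on one side of the kink of `f`, where `f` is affine;
* if `s_β α` is negative, then `α(β^∨) = 1` because `β` is the highest root of the part of
  `Φ` supported in its support, the partner of `α` is `β - α`, and both changes vanish by the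
  symmetry `f(1 - m) = f(m)` of `f` on the integers.
The orbit `{β}` contributes `f(2 - c) - f(c) = -1`.
-/

lemma Module.Basis.coord_eq_zero_of_mem_closure_image {ι R M : Type*} [Ring R] [AddCommGroup M]
    [Module R M] (b : Basis ι R M) {I : Set ι} {x : M} (hx : x ∈ AddSubgroup.closure (b '' I))
    {i : ι} (hi : i ∉ I) : b.coord i x = 0 := by
  have hspan : x ∈ Submodule.span R (b '' I) :=
    (AddSubgroup.closure_le (Submodule.span R (b '' I)).toAddSubgroup).mpr
      Submodule.subset_span hx
  rw [Basis.coord_apply, ← Finsupp.notMem_support_iff]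
  exact fun h => hi (b.mem_span_image.mp hspan h)

namespace PosRootSystem

variable {V : Type*} [AddCommGroup V] [Module ℝ V] (P : PosRootSystem V)

lemma lenAux_add_lenAux_eq {a b c d : ℝ} (hab : a ≤ b) (hac : a ≤ c) (hbd : b ≤ d)
    (hcd : c ≤ d) (h : a + d = b + c) (hside : 0 < a ∨ d ≤ 0) :
    lenAux a + lenAux d = lenAux b + lenAux c := by
  unfold lenAux
  rcases hside with hside | hside <;> split_ifs <;> linarith

lemma lenAux_one_sub_intCast (m : ℤ) : lenAux (1 - m) = lenAux m := by
  unfold lenAux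
  rcases le_or_gt m 0 with hm | hm
  · have hm' : (m : ℝ) ≤ 0 := by exact_mod_cast hm
    rw [if_neg (by linarith), if_pos hm']
    ring
  · have hm' : (1 : ℝ) ≤ m := by exact_mod_cast hm
    rw [if_pos (by linarith), if_neg (by linarith)]
    ring

def sReflDual (β α : Dual ℝ V) : Dual ℝ V := α - α (P.coroot β) • β

open Classical in
noncomputable def sReflPos (β α : Dual ℝ V) : Dual ℝ V :=
  if P.sReflDual β α ∈ P.pos then P.sReflDual β α else -P.sReflDual β α

noncomputable def lenChange (β : Dual ℝ V) (x : V) (α : Dual ℝ V) : ℝ :=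
  lenAux (α (P.rRefl β x)) - lenAux (α x)

variable {P} {β α : Dual ℝ V} {x : V}

lemma apply_rRefl (α : Dual ℝ V) : α (P.rRefl β x) = α x + (1 - β x) * α (P.coroot β) := by
  simp only [rRefl, sRefl, map_add, map_sub, map_smul, smul_eq_mul]
  ring

lemma sReflDual_apply_coroot (hβ2 : β (P.coroot β) = 2) :
    P.sReflDual β α (P.coroot β) = -α (P.coroot β) := by
  simp only [sReflDual, LinearMap.sub_apply, LinearMap.smul_apply, smul_eq_mul, hβ2]
  ring

lemma sReflDual_sReflDual (hβ2 : β (P.coroot β) = 2) : P.sReflDual β (P.sReflDual β α) = α := by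
  rw [sReflDual, sReflDual_apply_coroot hβ2, sReflDual]
  module

lemma sReflDual_neg : P.sReflDual β (-α) = -P.sReflDual β α := by
  rw [sReflDual, sReflDual, LinearMap.neg_apply]
  module

lemma sReflDual_self (hβ2 : β (P.coroot β) = 2) : P.sReflDual β β = -β := by
  rw [sReflDual, hβ2]
  module

lemma sReflDual_eq_self (hα : α (P.coroot β) = 0) : P.sReflDual β α = α := by
  simp [sReflDual, hα]

lemma sReflPos_mem_pos (hβ : β ∈ P.roots) (hα : α ∈ P.pos) : P.sReflPos β α ∈ P.pos := by
  unfold sReflPos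
  split_ifs with h
  · exact h
  · exact ((P.mem_roots_iff _).mp (P.reflect_mem α (P.pos_subset hα) β hβ)).resolve_left h

lemma sReflPos_sReflPos (hβ2 : β (P.coroot β) = 2) (hα : α ∈ P.pos) :
    P.sReflPos β (P.sReflPos β α) = α := by
  by_cases h : P.sReflDual β α ∈ P.pos
  · rw [show P.sReflPos β α = P.sReflDual β α from if_pos h, sReflPos,
      sReflDual_sReflDual hβ2, if_pos hα]
  · rw [show P.sReflPos β α = -P.sReflDual β α from if_neg h, sReflPos, sReflDual_neg,
      sReflDual_sReflDual hβ2, if_neg (P.neg_not_pos α hα), neg_neg]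

lemma sReflPos_self (hβ : β ∈ P.pos) (hβ2 : β (P.coroot β) = 2) : P.sReflPos β β = β := by
  rw [sReflPos, sReflDual_self hβ2, if_neg (P.neg_not_pos β hβ), neg_neg]

lemma lenChange_eq_zero (hα : α (P.coroot β) = 0) : P.lenChange β x α = 0 := by
  rw [lenChange, apply_rRefl, hα, mul_zero, add_zero, sub_self]

lemma lenChange_self (hβ2 : β (P.coroot β) = 2) (h2 : 2 ≤ β x) : P.lenChange β x β = -1 := by
  rw [lenChange, apply_rRefl, hβ2]
  unfold lenAux
  split_ifs <;> linarith

lemma lenChange_add_lenChange_of_isPosPair (hβ2 : β (P.coroot β) = 2) (h2 : 2 ≤ β x)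
    {α' : Dual ℝ V} (hpair : P.IsPosPair β α α') (hside : 0 < α x ∨ α' x ≤ 0) :
    P.lenChange β x α + P.lenChange β x α' = 0 := by
  obtain ⟨-, -, hk, rfl⟩ := hpair
  have hα'x : (α - α (P.coroot β) • β) x = α x - α (P.coroot β) * β x := rfl
  have hα'y : (α - α (P.coroot β) • β) (P.rRefl β x) = α x - α (P.coroot β) := by
    rw [apply_rRefl, hα'x, ← sReflDual, sReflDual_apply_coroot hβ2]
    ring
  rw [hα'x] at hside
  have key := lenAux_add_lenAux_eq (b := α x - α (P.coroot β))
    (c := α x + (1 - β x) * α (P.coroot β)) (by linarith) (by nlinarith) (by nlinarith)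
    (by linarith) (by ring) hside
  rw [lenChange, lenChange, hα'x, hα'y, apply_rRefl]
  linarith

lemma lenChange_add_lenChange_sReflDual (hβ2 : β (P.coroot β) = 2) (h2 : 2 ≤ β x)
    (hppc : ∀ α α' : Dual ℝ V, P.IsPosPair β α α' → 0 < α x ∨ α' x ≤ 0)
    (hα : α ∈ P.pos) (hsα : P.sReflDual β α ∈ P.pos) :
    P.lenChange β x α + P.lenChange β x (P.sReflDual β α) = 0 := by
  rcases lt_trichotomy (α (P.coroot β)) 0 with hneg | hzero | hpos
  · have hpair : P.IsPosPair β α (P.sReflDual β α) := ⟨hα, hsα, hneg, rfl⟩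
    exact lenChange_add_lenChange_of_isPosPair hβ2 h2 hpair (hppc _ _ hpair)
  · rw [sReflDual_eq_self hzero, lenChange_eq_zero hzero, add_zero]
  · have hpair : P.IsPosPair β (P.sReflDual β α) α :=
      ⟨hsα, hα, by rw [sReflDual_apply_coroot hβ2]; linarith, sReflDual_sReflDual hβ2⟩
    rw [add_comm]
    exact lenChange_add_lenChange_of_isPosPair hβ2 h2 hpair (hppc _ _ hpair)

lemma lenChange_add_lenChange_sub_of_apply_coroot_eq_one (hβ2 : β (P.coroot β) = 2)
    (hα : α (P.coroot β) = 1) {a c : ℤ} (ha : α x = a) (hc : β x = c) :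
    P.lenChange β x α + P.lenChange β x (β - α) = 0 := by
  have hαy : α (P.rRefl β x) = 1 - ((c - a : ℤ) : ℝ) := by
    rw [apply_rRefl, ha, hc, hα]
    push_cast
    ring
  have hα'x : (β - α) x = ((c - a : ℤ) : ℝ) := by
    rw [LinearMap.sub_apply, ha, hc]
    push_cast
    ring
  have hα'y : (β - α) (P.rRefl β x) = 1 - a := by
    rw [apply_rRefl, hα'x, LinearMap.sub_apply, hβ2, hα, hc]
    push_cast
    ring
  rw [lenChange, lenChange, hαy, hα'x, hα'y, ha, lenAux_one_sub_intCast,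
    lenAux_one_sub_intCast]
  ring

open Classical in
lemma lenChange_add_lenChange_sReflPos (hβ : β ∈ P.pos)
    (hneg : ∀ α ∈ P.pos, α ≠ β → P.sReflDual β α ∉ P.pos → α (P.coroot β) = 1)
    (hx : P.IsCoweight x) (h2 : 2 ≤ β x)
    (hppc : ∀ α α' : Dual ℝ V, P.IsPosPair β α α' → 0 < α x ∨ α' x ≤ 0) (hα : α ∈ P.pos) :
    P.lenChange β x α + P.lenChange β x (P.sReflPos β α) = if α = β then -2 else 0 := by
  have hβ2 := P.root_coroot_two β (P.pos_subset hβ)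
  split_ifs with hαβ
  · subst hαβ
    rw [sReflPos_self hβ hβ2, lenChange_self hβ2 h2]
    norm_num
  by_cases hsα : P.sReflDual β α ∈ P.pos
  · rw [sReflPos, if_pos hsα]
    exact lenChange_add_lenChange_sReflDual hβ2 h2 hppc hα hsα
  · have hα1 := hneg α hα hαβ hsα
    obtain ⟨a, ha⟩ := hx α (P.pos_subset hα)
    obtain ⟨c, hc⟩ := hx β (P.pos_subset hβ)
    have hsα' : P.sReflPos β α = β - α := by
      rw [sReflPos, if_neg hsα, sReflDual, hα1]
      module
    rw [hsα']
    exact lenChange_add_lenChange_sub_of_apply_coroot_eq_one hβ2 hα1 ha hc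

theorem lS_rRefl_eq_sub_one (hβ : β ∈ P.pos)
    (hneg : ∀ α ∈ P.pos, α ≠ β → P.sReflDual β α ∉ P.pos → α (P.coroot β) = 1)
    (hx : P.IsCoweight x) (h2 : 2 ≤ β x)
    (hppc : ∀ α α' : Dual ℝ V, P.IsPosPair β α α' → 0 < α x ∨ α' x ≤ 0) :
    P.lS (P.rRefl β x) = P.lS x - 1 := by
  classical
  have hβ2 := P.root_coroot_two β (P.pos_subset hβ)
  have hperm : ∑ α ∈ P.pos, P.lenChange β x (P.sReflPos β α) =
      ∑ α ∈ P.pos, P.lenChange β x α :=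
    Finset.sum_nbij' (P.sReflPos β) (P.sReflPos β)
      (fun _ hα => sReflPos_mem_pos (P.pos_subset hβ) hα)
      (fun _ hα => sReflPos_mem_pos (P.pos_subset hβ) hα)
      (fun _ hα => sReflPos_sReflPos hβ2 hα) (fun _ hα => sReflPos_sReflPos hβ2 hα)
      (fun _ _ => rfl)
  have hpaired : ∑ α ∈ P.pos, (P.lenChange β x α + P.lenChange β x (P.sReflPos β α)) = -2 := by
    rw [Finset.sum_congr rfl fun α hα => lenChange_add_lenChange_sReflPos hβ hneg hx h2 hppc hα,
      Finset.sum_ite_eq' P.pos β, if_pos hβ]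
  have hdiff : P.lS (P.rRefl β x) - P.lS x = ∑ α ∈ P.pos, P.lenChange β x α := by
    rw [lS, lS, ← Finset.sum_sub_distrib]
    rfl
  rw [Finset.sum_add_distrib, hperm] at hpaired
  linarith

variable (P) in
def IsHighestOnSupport {S : Type*} (b : Basis S ℝ (Dual ℝ V)) (β : Dual ℝ V) : Prop :=
  ∀ α ∈ P.pos, (∀ s, b.coord s β = 0 → b.coord s α = 0) → ∀ s, b.coord s α ≤ b.coord s β

-- With `n = α(β^∨)`, both `α` and `α' = nβ - α` are positive roots supported in the
-- support of `β`, so `nβ = α + α' ≤ 2β`, with equality only if `α = α' = β`.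
lemma apply_coroot_eq_one_of_sReflDual_not_mem_pos {S : Type*} {b : Basis S ℝ (Dual ℝ V)}
    (hb : ∀ γ ∈ P.pos, ∀ s, 0 ≤ b.coord s γ) (hβ : β ∈ P.pos)
    (hhigh : P.IsHighestOnSupport b β) (hα : α ∈ P.pos) (hαβ : α ≠ β)
    (hsα : P.sReflDual β α ∉ P.pos) : α (P.coroot β) = 1 := by
  have hβr := P.pos_subset hβ
  obtain ⟨n, hn⟩ := P.crystallographic α (P.pos_subset hα) β hβr
  set α' := (n : ℝ) • β - α
  have hα' : α' ∈ P.pos := by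
    have := ((P.mem_roots_iff _).mp (P.reflect_mem α (P.pos_subset hα) β hβr)).resolve_left hsα
    convert this using 1
    rw [hn]
    module
  have hsum : ∀ s, b.coord s α + b.coord s α' = n * b.coord s β := by
    intro s
    simp only [α', map_sub, map_smul, smul_eq_mul]
    ring
  have hsupp : ∀ s, b.coord s β = 0 → b.coord s α = 0 ∧ b.coord s α' = 0 := by
    intro s hs
    have := hsum s
    rw [hs, mul_zero] at this
    constructor <;> linarith [hb α hα s, hb α' hα' s]
  have hle := hhigh α hα fun s hs => (hsupp s hs).1
  have hle' := hhigh α' hα' fun s hs => (hsupp s hs).2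
  obtain ⟨s₀, hs₀⟩ : ∃ s, b.coord s β ≠ 0 := by
    by_contra! h
    simpa [b.forall_coord_eq_zero_iff.mp h] using P.root_coroot_two β hβr
  have hβs₀ : 0 < b.coord s₀ β := lt_of_le_of_ne (hb β hβ s₀) (Ne.symm hs₀)
  have hn_nonneg : (0 : ℝ) ≤ n := by
    have := hsum s₀
    nlinarith [hb α hα s₀, hb α' hα' s₀]
  have hn_le : (n : ℝ) ≤ 2 := by
    have := hsum s₀
    nlinarith [hle s₀, hle' s₀]
  have hn_ne_zero : n ≠ 0 := by
    rintro rfl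
    apply P.neg_not_pos α hα
    simpa [α'] using hα'
  have hn_ne_two : n ≠ 2 := by
    rintro rfl
    refine hαβ (sub_eq_zero.mp (b.forall_coord_eq_zero_iff.mp fun s => ?_))
    have := hsum s
    push_cast at this
    rw [map_sub]
    linarith [hle s, hle' s]
  have hn_one : n = 1 := by
    have : 0 ≤ n := by exact_mod_cast hn_nonneg
    have : n ≤ 2 := by exact_mod_cast hn_le
    omega
  rw [hn, hn_one, Int.cast_one]

lemma isHighestOnSupport_of_forall_sub_mem_closure {S : Type*} [Fintype S]
    {b : Basis S ℝ (Dual ℝ V)} {coeff : Dual ℝ V → S → ℤ}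
    (hcoeff : ∀ α ∈ P.roots, α = ∑ s, (coeff α s : ℝ) • b s)
    (hb : ∀ γ ∈ P.pos, ∀ s, 0 ≤ b.coord s γ) {I : Set S}
    (hβI : β ∈ AddSubgroup.closure (b '' I))
    (hhigh : ∀ α ∈ P.roots, α ∈ AddSubgroup.closure (b '' I) →
      β - α ∈ AddSubmonoid.closure {γ | γ ∈ P.pos ∧ γ ∈ AddSubgroup.closure (b '' I)}) :
    P.IsHighestOnSupport b β := by
  intro α hα hsupp s
  have hαr := P.pos_subset hα
  have hαI : α ∈ AddSubgroup.closure (b '' I) := by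
    rw [hcoeff α hαr]
    refine AddSubgroup.sum_mem _ fun t _ => ?_
    by_cases ht : t ∈ I
    · rw [Int.cast_smul_eq_zsmul ℝ (coeff α t) (b t)]
      exact AddSubgroup.zsmul_mem _ (AddSubgroup.subset_closure (Set.mem_image_of_mem b ht)) _
    · have h0 := hsupp t (b.coord_eq_zero_of_mem_closure_image hβI ht)
      conv_lhs at h0 => rw [hcoeff α hαr]
      rw [Basis.coord_apply, b.repr_sum_self] at h0
      rw [h0, zero_smul]
      exact zero_mem _
  have hcone : ∀ γ ∈ AddSubmonoid.closure {γ | γ ∈ P.pos ∧ γ ∈ AddSubgroup.closure (b '' I)},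
      0 ≤ b.coord s γ := by
    intro γ hγ
    induction hγ using AddSubmonoid.closure_induction with
    | mem γ hγ => exact hb γ hγ.1 s
    | zero => simp
    | add γ γ' _ _ h h' => rw [map_add]; positivity
  simpa [sub_nonneg] using hcone _ (hhigh α hαr hαI)

end PosRootSystem

theorem graph_splitting_move_general {V : Type*} [AddCommGroup V] [Module ℝ V]
    (P : PosRootSystem V)
    {S : Type*} [Fintype S]
    -- the base (simple roots) of `Φ`, indexed by `S`
    (δ : S → Module.Dual ℝ V)
    (hind : LinearIndependent ℝ δ)
    (coeff : Module.Dual ℝ V → S → ℤ)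
    (hcoeff : ∀ α ∈ P.roots, α = ∑ s, (coeff α s : ℝ) • δ s)
    (hcoeffpos : ∀ α ∈ P.pos, ∀ s, 0 ≤ coeff α s)
    (I : Set S)
    -- `α_I` is the highest root of the sub-root system `Φ_I` (in particular `Φ_I` is
    -- irreducible): `α_I` is a positive root lying in the ℤ-span of `{α_s : s ∈ I}`, and
    -- `α_I − α` is a nonnegative combination of positive roots of `Φ_I` for every root
    -- `α` of `Φ_I`
    (αI : Module.Dual ℝ V)
    (hαIpos : αI ∈ P.pos)
    (hαII : αI ∈ AddSubgroup.closure (δ '' I))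
    (hhigh : ∀ α ∈ P.roots, α ∈ AddSubgroup.closure (δ '' I) →
      αI - α ∈ AddSubmonoid.closure
        {γ : Module.Dual ℝ V | γ ∈ P.pos ∧ γ ∈ AddSubgroup.closure (δ '' I)})
    -- a coweight `λ` with `α_I(λ) ≥ 2` satisfying the positive pair condition for `α_I`
    (x : V) (hx : P.IsCoweight x)
    (h2 : 2 ≤ αI x)
    (hppc : ∀ α α' : Module.Dual ℝ V, P.IsPosPair αI α α' → (0 < α x ∨ α' x ≤ 0)) :
    P.lS (P.rRefl αI x) = P.lS x - 1 := by
  have hspan : ⊤ ≤ Submodule.span ℝ (Set.range δ) := by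
    rw [← P.span_top, Submodule.span_le]
    intro α hα
    rw [hcoeff α hα]
    exact Submodule.sum_mem _ fun s _ => Submodule.smul_mem _ _ (Submodule.subset_span ⟨s, rfl⟩)
  obtain ⟨b, rfl⟩ : ∃ b : Basis S ℝ (Module.Dual ℝ V), ⇑b = δ :=
    ⟨Basis.mk hind hspan, Basis.coe_mk _ _⟩
  have hnonneg : ∀ γ ∈ P.pos, ∀ s, 0 ≤ b.coord s γ := by
    intro γ hγ s
    rw [hcoeff γ (P.pos_subset hγ), Basis.coord_apply, b.repr_sum_self]
    exact_mod_cast hcoeffpos γ hγ s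
  have hhighest := P.isHighestOnSupport_of_forall_sub_mem_closure hcoeff hnonneg hαII hhigh
  exact P.lS_rRefl_eq_sub_one hαIpos (fun _ hα hne hs =>
    PosRootSystem.apply_coroot_eq_one_of_sReflDual_not_mem_pos hnonneg hαIpos hhighest hα hne hs)
    hx h2 hppc

/-- Graph-splitting move: if `I ⊊ S` is a proper subset of the simple roots such that the
sub-root system `Φ_I = Φ ∩ ℤ-span{α_s : s ∈ I}` is irreducible with highest root `α_I`,
and `λ` is a coweight with `α_I(λ) ≥ 2` satisfying the positive pair condition for
`β = α_I`, then `ℓ^S(r_{α_I} λ) = ℓ^S(λ) − 1`. -/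
theorem graph_splitting_move {V : Type*} [AddCommGroup V] [Module ℝ V]
    (P : PosRootSystem V)
    {S : Type*} [Fintype S] [DecidableEq S]
    -- the base (simple roots) of `Φ`, indexed by `S`
    (δ : S → Module.Dual ℝ V)
    (hδpos : ∀ s, δ s ∈ P.pos)
    (hind : LinearIndependent ℝ δ)
    (coeff : Module.Dual ℝ V → S → ℤ)
    (hcoeff : ∀ α ∈ P.roots, α = ∑ s, (coeff α s : ℝ) • δ s)
    (hcoeffpos : ∀ α ∈ P.pos, ∀ s, 0 ≤ coeff α s)
    -- a proper subset `I ⊊ S`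
    (I : Set S) (hproper : I ≠ Set.univ)
    -- `α_I` is the highest root of the sub-root system `Φ_I` (in particular `Φ_I` is
    -- irreducible): `α_I` is a positive root lying in the ℤ-span of `{α_s : s ∈ I}`, and
    -- `α_I − α` is a nonnegative combination of positive roots of `Φ_I` for every root
    -- `α` of `Φ_I`
    (αI : Module.Dual ℝ V)
    (hαIpos : αI ∈ P.pos)
    (hαII : αI ∈ AddSubgroup.closure (δ '' I))
    (hhigh : ∀ α ∈ P.roots, α ∈ AddSubgroup.closure (δ '' I) →
      αI - α ∈ AddSubmonoid.closure
        {γ : Module.Dual ℝ V | γ ∈ P.pos ∧ γ ∈ AddSubgroup.closure (δ '' I)})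
    -- a coweight `λ` with `α_I(λ) ≥ 2` satisfying the positive pair condition for `α_I`
    (x : V) (hx : P.IsCoweight x)
    (h2 : 2 ≤ αI x)
    (hppc : ∀ α α' : Module.Dual ℝ V, P.IsPosPair αI α α' → (0 < α x ∨ α' x ≤ 0)) :
    P.lS (P.rRefl αI x) = P.lS x - 1 :=
  graph_splitting_move_general P δ hind coeff hcoeff hcoeffpos I αI hαIpos hαII hhigh x hx h2 hppc
end

section
/- Fix n ≥ 2 and let a = (a_1, …, a_n) ∈ ℤ^n be an element of the coroot lattice of type A_n, i.e. Σ_{i=1}^n i·a_i ≡ 0 (mod n+1). Define the affine node values v_0 = 1 − (a_1 + ⋯ + a_n) and v_i = a_i for 1 ≤ i ≤ n, on the cycle graph with vertex set ℤ/(n+1). Then the following are equivalent: (I) exactly two of the values v_0, …, v_n are nonzero, the two corresponding nodes are adjacent on the cycle, and the two nonzero values sum to 1; (II) a = λ_{n,k} or a = λ′_{n,k} for some k ≥ 1, where, writing k = r(n+1) + i with 0 ≤ i ≤ n, λ_{n,k} is the vector with a_i = k+1 and a_{i+1} = −k and all other coordinates 0 (interpreted as a_1 = −k and all other coordinates 0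 when i = 0, and as a_n = k+1 and all other coordinates 0 when i = n), and λ′_{n,k} is the coordinate-reversal (a_j ↦ a_{n+1−j}) of λ_{n,k}. -/
/-- The spiral coroot lattice element `λ_{n,k}` of type `A_n`, in fundamental coweight
coordinates (0-indexed: coordinate `j` is `a_{j+1}`).  Writing `k = r(n+1) + i` with
`0 ≤ i ≤ n`, it has `a_i = k+1` and `a_{i+1} = -k` and all other coordinates `0`
(interpreted as `a_1 = -k` alone when `i = 0`, and `a_n = k+1` alone when `i = n`). -/
def spiral (n k : ℕ) : Fin n → ℤ := fun j =>
  let i := k % (n + 1)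
  if i = 0 then (if (j : ℕ) = 0 then -(k : ℤ) else 0)
  else if i = n then (if (j : ℕ) + 1 = n then (k : ℤ) + 1 else 0)
  else if (j : ℕ) + 1 = i then (k : ℤ) + 1
  else if (j : ℕ) + 1 = i + 1 then -(k : ℤ)
  else 0

/-- The labels of the affine Dynkin diagram of type `Ã_n` attached to a coroot lattice
element `a`: the affine node `0` is labelled `v_0 = 1 - (a_1 + ⋯ + a_n)` and the node
`i` (for `1 ≤ i ≤ n`) is labelled `v_i = a_i`. -/
def affineLabel (n : ℕ) (a : Fin n → ℤ) : Fin (n + 1) → ℤ := fun j =>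
  if h : (j : ℕ) = 0 then 1 - ∑ i : Fin n, a i
  else a ⟨(j : ℕ) - 1, by have := j.isLt; omega⟩

/-- Adjacency on the cycle graph with vertex set `ℤ/(n+1)`. -/
def cycleAdj (n : ℕ) (p q : Fin (n + 1)) : Prop :=
  ((p : ℕ) + 1) % (n + 1) = (q : ℕ) ∨ ((q : ℕ) + 1) % (n + 1) = (p : ℕ)

lemma mod_eq_of_int_dvd (m k r : ℕ) (hr : r < m) (h : (m:ℤ) ∣ (k:ℤ) - (r:ℤ)) :
    k % m = r := by
  have h1 : (k:ℤ) % m = (r:ℤ) % m :=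
    Int.emod_eq_emod_iff_emod_sub_eq_zero.mpr (Int.emod_eq_zero_of_dvd h)
  have h2 : (r:ℤ) % m = r := Int.emod_eq_of_lt (Int.natCast_nonneg r) (by exact_mod_cast hr)
  have h3 : ((k % m : ℕ):ℤ) = (k:ℤ) % (m:ℤ) := Int.natCast_mod k m
  exact_mod_cast h3.trans (h1.trans h2)

lemma spiral_apply (n k i : ℕ) (hn : 2 ≤ n) (hi : i = k % (n+1)) (j : Fin n) :
    spiral n k j = if (j:ℕ)+1 = i then (k:ℤ)+1
      else if i ≠ n ∧ (j:ℕ) = i then -(k:ℤ) else 0 := by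
  have hj := j.isLt
  simp only [spiral, ← hi]
  split_ifs <;> first | omega | tauto | (simp only [and_true, true_and, ne_eq] at *; omega)

lemma affineLabel_eval_zero (n : ℕ) (a : Fin n → ℤ) (r : Fin (n+1)) (hr : (r:ℕ) = 0) :
    affineLabel n a r = 1 - ∑ i : Fin n, a i := by
  simp [affineLabel, hr]

lemma affineLabel_eval (n : ℕ) (a : Fin n → ℤ) (r : Fin (n+1)) (hr : (r:ℕ) ≠ 0) :
    affineLabel n a r = a ⟨(r:ℕ)-1, by have := r.isLt; omega⟩ := by
  simp [affineLabel, hr]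

lemma sum_spiral (n k i : ℕ) (hn : 2 ≤ n) (hi : i = k % (n+1)) :
    ∑ j : Fin n, spiral n k j =
      if i = 0 then -(k:ℤ) else if i = n then (k:ℤ)+1 else 1 := by
  have hi' : i < n + 1 := by rw [hi]; exact Nat.mod_lt _ (by omega)
  rcases Nat.eq_zero_or_pos i with h0 | h0
  · rw [if_pos h0]
    rw [Fintype.sum_eq_single (⟨0, by omega⟩ : Fin n)
      (by
        intro b hb
        rw [spiral_apply n k i hn hi]
        have hb0 : (b:ℕ) ≠ 0 := fun h => hb (Fin.ext h)
        split_ifs <;> first | omega | tauto | (simp only [and_true, true_and, ne_eq] at *; omega))]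
    rw [spiral_apply n k i hn hi]
    split_ifs <;> first | omega | tauto | (simp only [and_true, true_and, ne_eq] at *; omega)
  rcases eq_or_ne i n with hN | hN
  · rw [if_neg (by omega), if_pos hN]
    rw [Fintype.sum_eq_single (⟨n-1, by omega⟩ : Fin n)
      (by
        intro b hb
        rw [spiral_apply n k i hn hi]
        have hb0 : (b:ℕ) ≠ n-1 := fun h => hb (Fin.ext h)
        have := b.isLt
        split_ifs <;> first | omega | tauto | (simp only [and_true, true_and, ne_eq] at *; omega))]
    rw [spiral_apply n k i hn hi]
    simp only [Fin.val_mk]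
    split_ifs <;> first | omega | tauto | (simp only [and_true, true_and, ne_eq] at *; omega)
  · rw [if_neg (by omega), if_neg hN]
    rw [Fintype.sum_eq_add (⟨i-1, by omega⟩ : Fin n) (⟨i, by omega⟩ : Fin n)
      (by simp only [ne_eq, Fin.mk.injEq]; omega)
      (by
        intro c hc
        rw [spiral_apply n k i hn hi]
        have h1 : (c:ℕ) ≠ i-1 := fun h => hc.1 (Fin.ext h)
        have h2 : (c:ℕ) ≠ i := fun h => hc.2 (Fin.ext h)
        split_ifs <;> first | omega | tauto | (simp only [and_true, true_and, ne_eq] at *; omega))]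
    rw [spiral_apply n k i hn hi, spiral_apply n k i hn hi]
    simp only [Fin.val_mk]
    split_ifs <;> first | omega | tauto | (simp only [and_true, true_and, ne_eq] at *; omega)

lemma label_spiral (n k i : ℕ) (hn : 2 ≤ n) (hi : i = k % (n+1)) (r : Fin (n+1)) :
    affineLabel n (spiral n k) r =
      if (r:ℕ) = i then (k:ℤ)+1
      else if (r:ℕ) = (if i = n then 0 else i+1) then -(k:ℤ) else 0 := by
  have hi' : i < n + 1 := by rw [hi]; exact Nat.mod_lt _ (by omega)
  by_cases hr : (r:ℕ) = 0
  · rw [affineLabel_eval_zero n _ r hr, sum_spiral n k i hn hi, hr]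
    split_ifs <;> first | omega | tauto | (simp only [and_true, true_and, ne_eq] at *; omega)
  · rw [affineLabel_eval n _ r hr, spiral_apply n k i hn hi]
    have := r.isLt
    simp only [Fin.val_mk]
    split_ifs <;> first | omega | tauto | (simp only [and_true, true_and, ne_eq] at *; omega)

lemma label_spiral_rev (n k i : ℕ) (hn : 2 ≤ n) (hi : i = k % (n+1)) (r : Fin (n+1)) :
    affineLabel n (fun j => spiral n k j.rev) r =
      if (r:ℕ) = (if i = 0 then 0 else n+1-i) then (k:ℤ)+1
      else if (r:ℕ) = n - i then -(k:ℤ) else 0 := by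
  have hi' : i < n + 1 := by rw [hi]; exact Nat.mod_lt _ (by omega)
  by_cases hr : (r:ℕ) = 0
  · rw [affineLabel_eval_zero n _ r hr]
    rw [Fintype.sum_bijective Fin.rev Fin.rev_involutive.bijective _ (spiral n k) (fun x => rfl)]
    rw [sum_spiral n k i hn hi, hr]
    split_ifs <;> first | omega | tauto | (simp only [and_true, true_and, ne_eq] at *; omega)
  · rw [affineLabel_eval n _ r hr]
    show spiral n k (Fin.rev _) = _
    rw [spiral_apply n k i hn hi, Fin.val_rev]
    have := r.isLt
    simp only [Fin.val_mk]
    split_ifs <;> first | omega | tauto | (simp only [and_true, true_and, ne_eq] at *; omega)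

lemma labels_give_exists (n : ℕ) (a : Fin n → ℤ) (P Q : ℕ)
    (hP : P < n+1) (hQ2 : Q < n+1) (hPQ : P ≠ Q)
    (hadj : (P+1) % (n+1) = Q ∨ (Q+1) % (n+1) = P)
    (c : ℤ) (hc0 : c ≠ 0) (hc1 : c ≠ 1)
    (hv : ∀ r : Fin (n+1), affineLabel n a r
      = if (r:ℕ) = P then c else if (r:ℕ) = Q then 1 - c else 0) :
    ∃ p q : Fin (n+1), p ≠ q ∧ cycleAdj n p q ∧
      affineLabel n a p + affineLabel n a q = 1 ∧
      (∀ r : Fin (n+1), affineLabel n a r ≠ 0 ↔ (r = p ∨ r = q)) := by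
  refine ⟨⟨P, hP⟩, ⟨Q, hQ2⟩, by simp [Fin.ext_iff]; omega, hadj, ?_, ?_⟩
  · rw [hv, hv]
    simp only [Fin.val_mk]
    rw [if_pos trivial, if_neg (by simpa using Ne.symm hPQ), if_pos trivial]
    ring
  · intro r
    rw [hv r]
    rw [show ((r = (⟨P,hP⟩ : Fin (n+1))) ∨ r = ⟨Q,hQ2⟩) ↔ ((r:ℕ) = P ∨ (r:ℕ) = Q)
      from by simp [Fin.ext_iff]]
    split_ifs with h1 h2
    · simp [h1, hc0]
    · simp only [h2, or_true, iff_true]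
      omega
    · simp [h1, h2]

lemma leaf (n t : ℕ) (hn : 2 ≤ n) (ht : t ≤ n) (a : Fin n → ℤ) (s : ℤ)
    (hs0 : s ≠ 0) (hs1 : s ≠ 1)
    (hdd : ((n:ℤ)+1) ∣ ((t:ℤ)+1) - s)
    (ha : ∀ j : Fin n, a j = if (j:ℕ)+1 = t then s
      else if t < n ∧ (j:ℕ) = t then 1-s else 0) :
    ∃ k : ℕ, 1 ≤ k ∧ (a = spiral n k ∨ a = fun j => spiral n k j.rev) := by
  obtain ⟨c, hc⟩ := hdd
  rcases le_or_gt 2 s with hs2 | hs2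
  · refine ⟨(s-1).toNat, by omega, Or.inl ?_⟩
    have hk : (((s-1).toNat : ℕ) : ℤ) = s - 1 := Int.toNat_of_nonneg (by omega)
    have hmod : (s-1).toNat % (n+1) = t :=
      mod_eq_of_int_dvd (n+1) _ t (by omega)
        ⟨-c, by rw [hk]; push_cast; linarith⟩
    funext j
    rw [ha j, spiral_apply n ((s-1).toNat) t hn hmod.symm j]
    have hj := j.isLt
    split_ifs <;> first | omega | tauto | (simp only [and_true, true_and, ne_eq] at *; omega)
  · have hs2' : s ≤ -1 := by omega
    refine ⟨(-s).toNat, by omega, Or.inr ?_⟩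
    have hk : (((-s).toNat : ℕ) : ℤ) = -s := Int.toNat_of_nonneg (by omega)
    have hnt : ((n - t : ℕ) : ℤ) = (n:ℤ) - t := by omega
    have hmod : (-s).toNat % (n+1) = n - t :=
      mod_eq_of_int_dvd (n+1) _ (n-t) (by omega)
        ⟨c - 1, by rw [hk, hnt]; push_cast; linarith⟩
    funext j
    rw [ha j]
    show _ = spiral n ((-s).toNat) j.rev
    rw [spiral_apply n ((-s).toNat) (n-t) hn hmod.symm j.rev, Fin.val_rev]
    have hj := j.isLt
    split_ifs <;> first | omega | tauto | (simp only [and_true, true_and, ne_eq] at *; omega)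

lemma forward_core (n : ℕ) (hn : 2 ≤ n) (a : Fin n → ℤ)
    (hQ : ((n : ℤ) + 1) ∣ ∑ j : Fin n, (((j : ℕ) : ℤ) + 1) * a j)
    (p q : Fin (n + 1)) (hpq : p ≠ q) (hadj : ((p : ℕ) + 1) % (n + 1) = (q : ℕ))
    (hsum : affineLabel n a p + affineLabel n a q = 1)
    (hne : ∀ r : Fin (n + 1), affineLabel n a r ≠ 0 ↔ (r = p ∨ r = q)) :
    ∃ k : ℕ, 1 ≤ k ∧ (a = spiral n k ∨ a = fun j => spiral n k j.rev) := by
  have hs0 : affineLabel n a p ≠ 0 := (hne p).mpr (Or.inl rfl)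
  have hq1 : affineLabel n a q ≠ 0 := (hne q).mpr (Or.inr rfl)
  set s := affineLabel n a p with hsdef
  have hq0 : affineLabel n a q = 1 - s := by omega
  have hs1 : s ≠ 1 := by rw [hq0] at hq1; omega
  have hv0 : ∀ r : Fin (n+1), r ≠ p → r ≠ q → affineLabel n a r = 0 := by
    intro r h1 h2
    by_contra h
    rcases (hne r).mp h with h' | h'
    · exact h1 h'
    · exact h2 h'
  have hvv : ∀ j : Fin n, a j = if (j:ℕ)+1 = (p:ℕ) then s
      else if (j:ℕ)+1 = (q:ℕ) then 1-s else 0 := by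
    intro j
    have hjr : affineLabel n a ⟨(j:ℕ)+1, by have := j.isLt; omega⟩ = a j := by
      rw [affineLabel_eval n a _ (by simp)]
      exact congrArg a (Fin.ext (by simp))
    rw [← hjr]
    split_ifs with h1 h2
    · rw [show (⟨(j:ℕ)+1, by have := j.isLt; omega⟩ : Fin (n+1)) = p from Fin.ext h1]
    · rw [show (⟨(j:ℕ)+1, by have := j.isLt; omega⟩ : Fin (n+1)) = q from Fin.ext h2]
      exact hq0
    · exact hv0 _ (fun h => h1 (congrArg Fin.val h)) (fun h => h2 (congrArg Fin.val h))
  have htp : (p:ℕ) < n+1 := p.isLt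
  rcases Nat.lt_or_ge (p:ℕ) n with htn | htn
  · have hqv : (q:ℕ) = (p:ℕ)+1 := by rw [← hadj, Nat.mod_eq_of_lt (by omega)]
    rcases Nat.eq_zero_or_pos (p:ℕ) with ht0 | ht0
    · -- t = 0
      obtain ⟨j0, hj0⟩ : ∃ j0 : Fin n, (j0:ℕ) = 0 := ⟨⟨0, by omega⟩, rfl⟩
      have hz : ∀ b : Fin n, b ≠ j0 → (((b:ℕ):ℤ)+1) * a b = 0 := by
        intro b hb
        rw [hvv]
        have hb0 : (b:ℕ) ≠ 0 := fun h => hb (Fin.ext (h.trans hj0.symm))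
        split_ifs <;> first | omega | ring
      have hSum : ∑ j : Fin n, (((j:ℕ):ℤ)+1) * a j = 1 - s := by
        rw [Fintype.sum_eq_single j0 hz, hvv, hj0]
        split_ifs <;> first | omega | (push_cast; ring)
      rw [hSum] at hQ
      obtain ⟨c, hc⟩ := hQ
      refine leaf n (p:ℕ) hn (by omega) a s hs0 hs1
        ⟨c, by rw [show ((p:ℕ):ℤ) = 0 from by exact_mod_cast ht0]; linarith⟩ ?_
      intro j
      rw [hvv j, hqv]
      split_ifs <;> first | omega | tauto | (simp only [and_true, true_and, ne_eq] at *; omega)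
    · -- 0 < t < n
      obtain ⟨j1, hj1⟩ : ∃ j1 : Fin n, (j1:ℕ) = (p:ℕ)-1 := ⟨⟨(p:ℕ)-1, by omega⟩, rfl⟩
      obtain ⟨j2, hj2⟩ : ∃ j2 : Fin n, (j2:ℕ) = (p:ℕ) := ⟨⟨(p:ℕ), by omega⟩, rfl⟩
      have hz : ∀ b : Fin n, b ≠ j1 ∧ b ≠ j2 → (((b:ℕ):ℤ)+1) * a b = 0 := by
        intro b hb
        rw [hvv]
        have h1 : (b:ℕ) ≠ (p:ℕ)-1 := fun h => hb.1 (Fin.ext (h.trans hj1.symm))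
        have h2 : (b:ℕ) ≠ (p:ℕ) := fun h => hb.2 (Fin.ext (h.trans hj2.symm))
        split_ifs <;> first | omega | ring
      have hSum : ∑ j : Fin n, (((j:ℕ):ℤ)+1) * a j
          = ((p:ℕ):ℤ) * s + (((p:ℕ):ℤ)+1) * (1-s) := by
        rw [Fintype.sum_eq_add j1 j2 (by rw [Fin.ne_iff_vne, hj1, hj2]; omega) hz]
        rw [hvv, hvv, hj1, hj2]
        have e : (((p:ℕ)-1 : ℕ):ℤ) = ((p:ℕ):ℤ) - 1 := by omega
        split_ifs <;> first | omega | (rw [e]; ring)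
      rw [hSum] at hQ
      obtain ⟨c, hc⟩ := hQ
      refine leaf n (p:ℕ) hn (by omega) a s hs0 hs1 ⟨c, by linear_combination hc⟩ ?_
      intro j
      rw [hvv j, hqv]
      split_ifs <;> first | omega | tauto | (simp only [and_true, true_and, ne_eq] at *; omega)
  · -- t = n
    have htn' : (p:ℕ) = n := by omega
    have hqv : (q:ℕ) = 0 := by rw [← hadj, htn', Nat.mod_self]
    obtain ⟨j0, hj0⟩ : ∃ j0 : Fin n, (j0:ℕ) = n-1 := ⟨⟨n-1, by omega⟩, rfl⟩
    have hz : ∀ b : Fin n, b ≠ j0 → (((b:ℕ):ℤ)+1) * a b = 0 := by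
      intro b hb
      rw [hvv]
      have hb0 : (b:ℕ) ≠ n-1 := fun h => hb (Fin.ext (h.trans hj0.symm))
      have := b.isLt
      split_ifs <;> first | omega | ring
    have hSum : ∑ j : Fin n, (((j:ℕ):ℤ)+1) * a j = (n:ℤ) * s := by
      rw [Fintype.sum_eq_single j0 hz, hvv, hj0]
      have e : ((n-1 : ℕ):ℤ) = (n:ℤ) - 1 := by omega
      split_ifs <;> first | omega | (rw [e]; ring)
    rw [hSum] at hQ
    obtain ⟨c, hc⟩ := hQ
    refine leaf n (p:ℕ) hn (by omega) a s hs0 hs1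
      ⟨1 + c - s, by rw [show ((p:ℕ):ℤ) = (n:ℤ) from by exact_mod_cast htn']; linear_combination hc⟩ ?_
    intro j
    rw [hvv j, hqv]
    split_ifs <;> first | omega | tauto | (simp only [and_true, true_and, ne_eq] at *; omega)

/-- For `n ≥ 2` and `a` in the coroot lattice of type `A_n`, the labelled affine diagram
of `a` has exactly two nonzero labels, sitting at adjacent nodes of the cycle and summing
to `1`, if and only if `a` is one of the spiral elements `λ_{n,k}` or `λ′_{n,k}` for some
`k ≥ 1` (where `λ′_{n,k}` is the coordinate reversal of `λ_{n,k}`). -/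
theorem spiral_iff_two_adjacent_nonzero_labels (n : ℕ) (hn : 2 ≤ n) (a : Fin n → ℤ)
    (hQ : ((n : ℤ) + 1) ∣ ∑ j : Fin n, (((j : ℕ) : ℤ) + 1) * a j) :
    (∃ p q : Fin (n + 1), p ≠ q ∧ cycleAdj n p q ∧
        affineLabel n a p + affineLabel n a q = 1 ∧
        (∀ r : Fin (n + 1), affineLabel n a r ≠ 0 ↔ (r = p ∨ r = q)))
    ↔ (∃ k : ℕ, 1 ≤ k ∧
        (a = spiral n k ∨ a = fun j => spiral n k j.rev)) := by
  constructor
  · rintro ⟨p, q, hpq, hadj, hsum, hne⟩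
    rcases hadj with h | h
    · exact forward_core n hn a hQ p q hpq h hsum hne
    · exact forward_core n hn a hQ q p hpq.symm h (by linarith) (fun r => (hne r).trans or_comm)
  · rintro ⟨k, hk, (rfl | rfl)⟩
    · have hi : k % (n+1) = k % (n+1) := rfl
      have hi' : k % (n+1) < n + 1 := Nat.mod_lt _ (by omega)
      refine labels_give_exists n _ (k % (n+1)) (if k % (n+1) = n then 0 else k % (n+1) + 1)
        hi' (by split_ifs <;> omega) (by split_ifs <;> omega)
        (Or.inl ?_) ((k:ℤ)+1) (by omega) (by omega)
        (fun r => by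
          rw [label_spiral n k (k % (n+1)) hn rfl r]
          split_ifs <;> first | omega | tauto | (simp only [and_true, true_and, ne_eq] at *; omega))
      split_ifs with h
      · rw [h]
        exact Nat.mod_self (n+1)
      · exact Nat.mod_eq_of_lt (by omega)
    · have hi' : k % (n+1) < n + 1 := Nat.mod_lt _ (by omega)
      refine labels_give_exists n _ (if k % (n+1) = 0 then 0 else n+1-(k % (n+1))) (n - k % (n+1))
        (by split_ifs <;> omega) (by omega) (by split_ifs <;> omega)
        (Or.inr ?_) ((k:ℤ)+1) (by omega) (by omega)
        (fun r => by
          rw [label_spiral_rev n k (k % (n+1)) hn rfl r]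
          split_ifs <;> first | omega | tauto | (simp only [and_true, true_and, ne_eq] at *; omega))
      split_ifs with h
      · rw [h]
        simp [Nat.mod_self]
      · rw [Nat.mod_eq_of_lt (by omega)]
        omega
end

section
/- Let Φ^+ = {e_1, e_2, e_3} ∪ {e_i − e_j, e_i + e_j : 1 ≤ i < j ≤ 3} be the positive roots of B_3 in ℝ^3, and let λ = (2, −1, −1) ∈ Q^∨ (this is the coroot lattice element 3ω_1^∨ − ω_3^∨). Then ℓ^S(λ) = 9, and for j = 0, 1, …, 9 the number of μ ∈ Q^∨ with μ ≤ λ and ℓ^S(μ) = j is, respectively, 1, 1, 1, 2, 2, 2, 2, 1, 1, 1; in particular the rank generating function Σ_{μ ≤ λ} t^{ℓ^S(μ)} = 1 + t + t^2 + 2t^3 + 2t^4 + 2t^5 + 2t^6 + t^7 + t^8 + t^9 is palindromic. -/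
namespace B3

/-- The positive roots of `B₃` in `ℤ³ ⊆ ℝ³`:
`e₁, e₂, e₃` and `eᵢ − eⱼ, eᵢ + eⱼ` for `1 ≤ i < j ≤ 3`. -/
def pos : Finset (Fin 3 → ℤ) :=
  {![1,0,0], ![0,1,0], ![0,0,1],
   ![1,-1,0], ![1,0,-1], ![0,1,-1],
   ![1,1,0], ![1,0,1], ![0,1,1]}

/-- The standard inner product pairing `α(λ)`. -/
def pair (α x : Fin 3 → ℤ) : ℤ := ∑ i, α i * x i

/-- The coroot: a short root `eᵢ` has coroot `2eᵢ`, a long root is its own coroot. -/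
def coroot (α : Fin 3 → ℤ) : Fin 3 → ℤ :=
  if pair α α = 1 then fun i => 2 * α i else α

/-- `f(m) = -m` for `m ≤ 0` and `f(m) = m - 1` for `m > 0`. -/
def f (m : ℤ) : ℤ := if m ≤ 0 then -m else m - 1

/-- `ℓ^S(λ) = Σ_{α ∈ Φ⁺} f(α(λ))`. -/
def lS (x : Fin 3 → ℤ) : ℤ := ∑ α ∈ pos, f (pair α x)

/-- The affine reflection `r_{α,k}(λ) = λ − (α(λ) − k)·α^∨`. -/
def reflect (α : Fin 3 → ℤ) (k : ℤ) (x : Fin 3 → ℤ) : Fin 3 → ℤ :=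
  x - (pair α x - k) • coroot α

/-- `μ` is obtained from `λ` by an affine reflection decreasing `ℓ^S`. -/
def lowerReflect (μ lam : Fin 3 → ℤ) : Prop :=
  ∃ α ∈ pos, ∃ k : ℤ, μ = reflect α k lam ∧ lS μ < lS lam

/-- The Bruhat order on the coroot lattice (i.e. on `W̃/W`), as the reflexive-transitive
closure of length-decreasing affine reflections. -/
def bruhatLE : (Fin 3 → ℤ) → (Fin 3 → ℤ) → Prop := Relation.ReflTransGen lowerReflect

/-- Membership in the coroot lattice `Q^∨` of `B₃`: coordinate sum is even. -/
def mem_corootLattice (x : Fin 3 → ℤ) : Prop := Even (x 0 + x 1 + x 2)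

/-! ### Auxiliary material -/

/-- The full lower order ideal below `λ = (2,−1,−1)`. -/
def S : Finset (Fin 3 → ℤ) :=
  {![0,0,0], ![1,1,0], ![1,0,1], ![0,1,1], ![1,0,-1], ![0,1,-1], ![1,-1,0],
   ![0,-1,1], ![2,0,0], ![0,-1,-1], ![2,1,1], ![2,1,-1], ![2,-1,1], ![2,-1,-1]}

lemma f_nonneg (m : ℤ) : 0 ≤ f m := by unfold f; split <;> omega

lemma f_ge_abs (m : ℤ) : |m| - 1 ≤ f m := by
  unfold f; rcases abs_cases m with ⟨h1, h2⟩ | ⟨h1, h2⟩ <;> split <;> omega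

lemma single_le_lS {α : Fin 3 → ℤ} (hα : α ∈ pos) (μ : Fin 3 → ℤ) :
    f (pair α μ) ≤ lS μ :=
  Finset.single_le_sum (fun β _ => f_nonneg (pair β μ)) hα

lemma pair_sub_smul (β α : Fin 3 → ℤ) (c : ℤ) (ν : Fin 3 → ℤ) :
    pair β (ν - c • α) = pair β ν - c * pair β α := by
  unfold pair
  rw [Finset.mul_sum, ← Finset.sum_sub_distrib]
  exact Finset.sum_congr rfl fun i _ => by
    simp only [Pi.sub_apply, Pi.smul_apply, smul_eq_mul]; ring

lemma pair_coroot_self : ∀ α ∈ pos, pair α (coroot α) = 2 := by decide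

lemma bound_S : ∀ ν ∈ S, ∀ α ∈ pos, lS ν + |pair α ν| ≤ 12 := by decide

set_option maxRecDepth 100000 in
set_option maxHeartbeats 4000000 in
lemma closed_S : ∀ ν ∈ S, ∀ α ∈ pos, ∀ c ∈ Finset.Icc (-6:ℤ) 6,
    lS (ν - c • coroot α) < lS ν → (ν - c • coroot α) ∈ S := by decide

lemma step_mem {ν : Fin 3 → ℤ} (hν : ν ∈ S) {μ : Fin 3 → ℤ}
    (h : lowerReflect μ ν) : μ ∈ S := by
  obtain ⟨α, hα, k, rfl, hlt⟩ := h
  have hre : reflect α k ν = ν - (pair α ν - k) • coroot α := rfl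
  set c : ℤ := pair α ν - k with hc
  have hpair : pair α (ν - c • coroot α) = pair α ν - c * 2 := by
    rw [pair_sub_smul, pair_coroot_self α hα]
  have h1 : |pair α ν - c * 2| - 1 ≤ lS (ν - c • coroot α) :=
    le_trans (by rw [← hpair]; exact f_ge_abs _) (single_le_lS hα _)
  have h2 : lS (ν - c • coroot α) < lS ν := by rw [← hre]; exact hlt
  have h3 : lS ν + |pair α ν| ≤ 12 := bound_S ν hν α hα
  have hc6 : c ∈ Finset.Icc (-6:ℤ) 6 := by
    rw [Finset.mem_Icc]
    rcases abs_cases (pair α ν - c * 2) with ⟨e1, e2⟩ | ⟨e1, e2⟩ <;>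
      rcases abs_cases (pair α ν) with ⟨g1, g2⟩ | ⟨g1, g2⟩ <;> omega
  rw [hre]
  exact closed_S ν hν α hα c hc6 h2

lemma mem_S_of_le {μ : Fin 3 → ℤ} (h : bruhatLE μ ![2,-1,-1]) : μ ∈ S := by
  induction h using Relation.ReflTransGen.head_induction_on with
  | refl => decide
  | head hab _ ih => exact step_mem ih hab

lemma lr (α : Fin 3 → ℤ) (hα : α ∈ pos) (k : ℤ) (μ ν : Fin 3 → ℤ)
    (h1 : μ = reflect α k ν) (h2 : lS μ < lS ν) : lowerReflect μ ν :=
  ⟨α, hα, k, h1, h2⟩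

lemma le_of_S : ∀ μ ∈ S, bruhatLE μ ![2,-1,-1] := by
  have hlam : bruhatLE ![2,-1,-1] ![2,-1,-1] := Relation.ReflTransGen.refl
  have h1 : bruhatLE ![2,-1,1] ![2,-1,-1] :=
    Relation.ReflTransGen.head (lr ![0,0,1] (by decide) 0 _ _ (by decide) (by decide)) hlam
  have h2 : bruhatLE ![2,1,-1] ![2,-1,-1] :=
    Relation.ReflTransGen.head (lr ![0,1,0] (by decide) 0 _ _ (by decide) (by decide)) hlam
  have h3 : bruhatLE ![2,1,1] ![2,-1,-1] :=
    Relation.ReflTransGen.head (lr ![0,1,1] (by decide) 0 _ _ (by decide) (by decide)) hlam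
  have h4 : bruhatLE ![0,-1,-1] ![2,-1,-1] :=
    Relation.ReflTransGen.head (lr ![1,0,0] (by decide) 1 _ _ (by decide) (by decide)) hlam
  have h5 : bruhatLE ![2,0,0] ![2,-1,-1] :=
    Relation.ReflTransGen.head (lr ![0,1,1] (by decide) (-1) _ _ (by decide) (by decide)) hlam
  have h6 : bruhatLE ![0,-1,1] ![2,-1,-1] :=
    Relation.ReflTransGen.head (lr ![1,0,-1] (by decide) 1 _ _ (by decide) (by decide)) hlam
  have h7 : bruhatLE ![1,-1,0] ![2,-1,-1] :=
    Relation.ReflTransGen.head (lr ![1,0,-1] (by decide) 2 _ _ (by decide) (by decide)) hlam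
  have h8 : bruhatLE ![0,1,-1] ![2,-1,-1] :=
    Relation.ReflTransGen.head (lr ![1,-1,0] (by decide) 1 _ _ (by decide) (by decide)) hlam
  have h9 : bruhatLE ![1,0,-1] ![2,-1,-1] :=
    Relation.ReflTransGen.head (lr ![1,-1,0] (by decide) 2 _ _ (by decide) (by decide)) hlam
  have h10 : bruhatLE ![0,1,1] ![2,-1,-1] :=
    Relation.ReflTransGen.head (lr ![0,1,1] (by decide) 0 _ ![0,-1,-1] (by decide) (by decide)) h4
  have h11 : bruhatLE ![1,0,1] ![2,-1,-1] :=
    Relation.ReflTransGen.head (lr ![1,-1,0] (by decide) 2 _ ![2,-1,1] (by decide) (by decide)) h1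
  have h12 : bruhatLE ![1,1,0] ![2,-1,-1] :=
    Relation.ReflTransGen.head (lr ![1,0,-1] (by decide) 2 _ ![2,1,-1] (by decide) (by decide)) h2
  have h13 : bruhatLE ![0,0,0] ![2,-1,-1] :=
    Relation.ReflTransGen.head (lr ![0,1,1] (by decide) (-1) _ ![0,-1,-1] (by decide) (by decide)) h4
  intro μ hμ
  fin_cases hμ <;> assumption

lemma lattice_S : ∀ μ ∈ S, mem_corootLattice μ := by
  simp only [mem_corootLattice]
  decide

/-- For `λ = (2,−1,−1) = 3ω₁^∨ − ω₃^∨` in type `B₃`: `ℓ^S(λ) = 9`, and the number of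
`μ ∈ Q^∨` with `μ ≤ λ` and `ℓ^S(μ) = j` is `1,1,1,2,2,2,2,1,1,1` for `j = 0,…,9`;
in particular the rank generating function
`1 + t + t² + 2t³ + 2t⁴ + 2t⁵ + 2t⁶ + t⁷ + t⁸ + t⁹` is palindromic. -/
theorem b3_exceptional_palindromic :
    lS ![2,-1,-1] = 9 ∧
    ∀ j : Fin 10,
      Set.ncard {μ : Fin 3 → ℤ | mem_corootLattice μ ∧ bruhatLE μ ![2,-1,-1] ∧
          lS μ = ((j : ℕ) : ℤ)}
        = ![1,1,1,2,2,2,2,1,1,1] j := by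
  refine ⟨by decide, fun j => ?_⟩
  have hset : {μ : Fin 3 → ℤ | mem_corootLattice μ ∧ bruhatLE μ ![2,-1,-1] ∧
      lS μ = ((j : ℕ) : ℤ)} = ↑(S.filter (fun μ => lS μ = ((j : ℕ) : ℤ))) := by
    ext μ
    simp only [Set.mem_setOf_eq, Finset.coe_filter, Finset.mem_coe]
    constructor
    · rintro ⟨-, hb, hl⟩; exact ⟨mem_S_of_le hb, hl⟩
    · rintro ⟨hS, hl⟩; exact ⟨lattice_S μ hS, le_of_S μ hS, hl⟩
  rw [hset, Set.ncard_coe_finset]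
  fin_cases j <;> decide

end B3
end
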